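/- arXiv:1101.5959 — 8 statements merged into one kernel-verified Lean document; each statement's English description precedes it below -/
import Mathlib

section
/- Let X, Y be Banach spaces, F : X ⇉ Y, L > 0, and (x̄, ȳ) ∈ Gr F. Then F is L-open at (x̄, ȳ) if and only if F⁻¹ is L⁻¹-pseudocalm at (ȳ, x̄). -/
open Set Metric Pointwise
open Filter Topology
open scoped ENNReal

/-!
A point `y` lies in `F(B(x₀, ρ))` exactly when `d(x₀, F⁻¹(y)) < ρ`. Openness therefore says
`d(x₀, F⁻¹(y)) < ρ` whenever `‖y - y₀‖ / L < ρ < ε`, and letting `ρ` decrease to `‖y - y₀‖ / L`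
turns this into the pseudocalmness bound `d(x₀, F⁻¹(y)) ≤ ‖y - y₀‖ / L` on the ball
`‖y - y₀‖ < ε L`; conversely that bound gives the strict inequality for every larger `ρ`.
-/

theorem mem_biUnion_ball_iff_infEDist_lt {X Y : Type*} [PseudoMetricSpace X]
    {F : X → Set Y} {x₀ : X} {ρ : ℝ} {y : Y} :
    y ∈ ⋃ x ∈ ball x₀ ρ, F x ↔ infEDist x₀ {x | y ∈ F x} < ENNReal.ofReal ρ := by
  simp only [mem_iUnion₂, exists_prop, mem_ball, infEDist_lt_iff, mem_ofPred_eq, edist_lt_ofReal,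
    dist_comm x₀, and_comm]

theorem ENNReal.forall_lt_ofReal_iff_le_ofReal {d : ℝ≥0∞} {r ε : ℝ} (hr : 0 ≤ r) :
    (∀ ρ ∈ Ioo 0 ε, r < ρ → d < ENNReal.ofReal ρ) ↔ (r < ε → d ≤ ENNReal.ofReal r) := by
  constructor
  · intro h hrε
    have hle : ∀ᶠ ρ in 𝓝[>] r, d ≤ ENNReal.ofReal ρ := by
      filter_upwards [Ioo_mem_nhdsGT hrε] with ρ hρ
      exact (h ρ ⟨hr.trans_lt hρ.1, hρ.2⟩ hρ.1).le
    exact ge_of_tendsto (ENNReal.continuous_ofReal.continuousWithinAt.tendsto) hle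
  · rintro h ρ ⟨hρ, hρε⟩ hrρ
    exact (h (hrρ.trans hρε)).trans_lt ((ENNReal.ofReal_lt_ofReal_iff hρ).2 hrρ)

theorem open_at_point_iff_inverse_pseudocalm_general
    {X Y : Type*} [NormedAddCommGroup X]
    [NormedAddCommGroup Y]
    (F : X → Set Y) (x₀ : X) (y₀ : Y) (L : ℝ) (hL : 0 < L) :
    (∃ ε > 0, ∀ ρ ∈ Ioo (0:ℝ) ε, ball y₀ (ρ * L) ⊆ ⋃ x ∈ ball x₀ ρ, F x)
      ↔
    (∃ V ∈ nhds y₀, ∀ y ∈ V,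
        EMetric.infEdist x₀ {x | y ∈ F x} ≤ ENNReal.ofReal (L⁻¹ * ‖y - y₀‖)) := by
  set D : Y → ℝ≥0∞ := fun y ↦ infEDist x₀ {x | y ∈ F x}
  set r : Y → ℝ := fun y ↦ L⁻¹ * ‖y - y₀‖
  have hball (ρ : ℝ) (y : Y) : y ∈ ball y₀ (ρ * L) ↔ r y < ρ := by
    rw [mem_ball, dist_eq_norm, inv_mul_lt_iff₀ hL, mul_comm]
  calc (∃ ε > 0, ∀ ρ ∈ Ioo (0:ℝ) ε, ball y₀ (ρ * L) ⊆ ⋃ x ∈ ball x₀ ρ, F x)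
      ↔ ∃ ε > 0, ∀ y, r y < ε → D y ≤ ENNReal.ofReal (r y) := by
        simp only [subset_def, hball, mem_biUnion_ball_iff_infEDist_lt]
        refine exists_congr fun ε ↦ and_congr_right fun _ ↦ ?_
        have key (y : Y) := ENNReal.forall_lt_ofReal_iff_le_ofReal (d := D y) (ε := ε)
          (show 0 ≤ r y by positivity)
        exact ⟨fun h y ↦ (key y).1 fun ρ hρ hy ↦ h ρ hρ y hy,
          fun h ρ hρ y hy ↦ (key y).2 (h y) ρ hρ hy⟩
    _ ↔ ∃ ε > 0, ∀ y ∈ ball y₀ (ε * L), D y ≤ ENNReal.ofReal (r y) := by simp only [hball]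
    _ ↔ ∃ δ > 0, ∀ y ∈ ball y₀ δ, D y ≤ ENNReal.ofReal (r y) :=
        ⟨fun ⟨ε, hε, h⟩ ↦ ⟨ε * L, by positivity, h⟩,
          fun ⟨δ, hδ, h⟩ ↦ ⟨δ / L, by positivity, by rwa [div_mul_cancel₀ _ hL.ne']⟩⟩
    _ ↔ ∀ᶠ y in 𝓝 y₀, D y ≤ ENNReal.ofReal (r y) := eventually_nhds_iff_ball.symm
    _ ↔ _ := eventually_iff_exists_mem

/-- `F` is `L`-open at `(x₀, y₀)` iff `F⁻¹` is `L⁻¹`-pseudocalm at `(y₀, x₀)`. -/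
theorem open_at_point_iff_inverse_pseudocalm
    {X Y : Type*} [NormedAddCommGroup X] [NormedSpace ℝ X] [CompleteSpace X]
    [NormedAddCommGroup Y] [NormedSpace ℝ Y] [CompleteSpace Y]
    (F : X → Set Y) (x₀ : X) (y₀ : Y) (hxy : y₀ ∈ F x₀) (L : ℝ) (hL : 0 < L) :
    (∃ ε > 0, ∀ ρ ∈ Ioo (0:ℝ) ε, ball y₀ (ρ * L) ⊆ ⋃ x ∈ ball x₀ ρ, F x)
      ↔
    (∃ V ∈ nhds y₀, ∀ y ∈ V,
        EMetric.infEdist x₀ {x | y ∈ F x} ≤ ENNReal.ofReal (L⁻¹ * ‖y - y₀‖)) :=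
  open_at_point_iff_inverse_pseudocalm_general F x₀ y₀ L hL
end

section
/- Let X be a metric space, P a metric space, Y a normed space, H : X × P ⇉ Y a set-valued map with 0 ∈ H(x̄, p̄), and S(p) := {x ∈ X : 0 ∈ H(x,p)}. If H is open at linear rate c > 0 with respect to x uniformly in p around (x̄, p̄, 0), then there exist α, β, γ > 0 such that for every (x,p) ∈ B(x̄,α) × B(p̄,β), d(x, S(p)) ≤ c⁻¹ d(0, H(x,p) ∩ B(0,γ)). -/
/-!
Given `y ∈ H(x, p)` with `‖y‖ < c ε`, every radius `ρ ∈ (‖y‖ / c, ε)` puts `0` in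
`ball y (ρ c) ⊆ H(ball x ρ, p)`, so `S(p)` meets `ball x ρ`; letting `ρ ↓ ‖y‖ / c` gives
`d(x, S(p)) ≤ ‖y‖ / c`, and taking the infimum over such `y` gives the estimate.
-/

open Set Metric Filter

theorem Metric.infEDist_setOf_zero_mem_le {X Y : Type*} [PseudoMetricSpace X] [Zero Y]
    {F : X → Set Y} {x : X} {ρ : ℝ} (h : (0 : Y) ∈ ⋃ x' ∈ ball x ρ, F x') :
    infEDist x {x' | (0 : Y) ∈ F x'} ≤ ENNReal.ofReal ρ := by
  obtain ⟨x', hx', hx'F⟩ := mem_iUnion₂.mp h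
  calc infEDist x {x' | (0 : Y) ∈ F x'} ≤ edist x x' := infEDist_le_edist_of_mem hx'F
    _ ≤ ENNReal.ofReal ρ := by
      rw [edist_dist, dist_comm]
      exact ENNReal.ofReal_le_ofReal (mem_ball.mp hx').le

theorem Metric.infEDist_setOf_zero_mem_le_of_ball_subset {X Y : Type*} [PseudoMetricSpace X]
    [SeminormedAddCommGroup Y] {F : X → Set Y} {x : X} {y : Y} {c ε : ℝ} (hc : 0 < c)
    (hopen : ∀ ρ ∈ Ioo (0 : ℝ) ε, ball y (ρ * c) ⊆ ⋃ x' ∈ ball x ρ, F x')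
    (hy : ‖y‖ < c * ε) :
    infEDist x {x' | (0 : Y) ∈ F x'} ≤ ENNReal.ofReal (c⁻¹ * ‖y‖) := by
  have hr : c⁻¹ * ‖y‖ < ε := by rwa [inv_mul_lt_iff₀ hc]
  refine ge_of_tendsto (ENNReal.continuous_ofReal.tendsto _ |>.mono_left nhdsWithin_le_nhds)
    (eventually_of_mem (Ioo_mem_nhdsGT hr) fun ρ hρ => infEDist_setOf_zero_mem_le ?_)
  have hρ_pos : 0 < ρ := (by positivity : 0 ≤ c⁻¹ * ‖y‖).trans_lt hρ.1
  refine hopen ρ ⟨hρ_pos, hρ.2⟩ ?_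
  rw [mem_ball, dist_zero_left, mul_comm]
  exact (inv_mul_lt_iff₀ hc).mp hρ.1

theorem Metric.le_mul_infEDist {α : Type*} [PseudoEMetricSpace α] {x : α} {s : Set α}
    {d k : ENNReal} (hk₀ : k ≠ 0) (hk : k ≠ ⊤) (h : ∀ y ∈ s, d ≤ k * edist x y) :
    d ≤ k * infEDist x s := by
  rw [mul_comm, ← ENNReal.div_le_iff hk₀ hk, le_infEDist]
  intro y hy
  rw [ENNReal.div_le_iff hk₀ hk, mul_comm]
  exact h y hy

theorem implicit_multifunction_estimate_general
    {X P Y : Type*} [MetricSpace X] [MetricSpace P]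
    [NormedAddCommGroup Y]
    (H : X → P → Set Y) (x₀ : X) (p₀ : P) (c : ℝ) (hc : 0 < c)
    (hopen : ∃ ε > 0, ∃ U ∈ nhds x₀, ∃ V ∈ nhds p₀, ∃ W ∈ nhds (0:Y),
      ∀ ρ ∈ Ioo (0:ℝ) ε, ∀ p ∈ V, ∀ x ∈ U, ∀ y ∈ W, y ∈ H x p →
        ball y (ρ * c) ⊆ ⋃ x' ∈ ball x ρ, H x' p) :
    ∃ α > 0, ∃ β > 0, ∃ γ > 0, ∀ x ∈ ball x₀ α, ∀ p ∈ ball p₀ β,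
      EMetric.infEdist x {x' | (0:Y) ∈ H x' p} ≤
        ENNReal.ofReal c⁻¹ * EMetric.infEdist (0:Y) (H x p ∩ ball (0:Y) γ) := by
  obtain ⟨ε, hε, U, hU, V, hV, W, hW, hkey⟩ := hopen
  obtain ⟨α, hα, hαU⟩ := Metric.mem_nhds_iff.mp hU
  obtain ⟨β, hβ, hβV⟩ := Metric.mem_nhds_iff.mp hV
  obtain ⟨γ, hγ, hγW⟩ := Metric.mem_nhds_iff.mp hW
  refine ⟨α, hα, β, hβ, min γ (c * ε), lt_min hγ (mul_pos hc hε), fun x hx p hp => ?_⟩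
  refine le_mul_infEDist (by simpa using hc) ENNReal.ofReal_ne_top fun y ⟨hyH, hyB⟩ => ?_
  have hy : ‖y‖ < min γ (c * ε) := by simpa using hyB
  rw [edist_dist, dist_zero_left, ← ENNReal.ofReal_mul (inv_nonneg.mpr hc.le)]
  refine infEDist_setOf_zero_mem_le_of_ball_subset hc (fun ρ hρ => ?_)
    (hy.trans_le (min_le_right _ _))
  exact hkey ρ hρ p (hβV hp) x (hαU hx) y (hγW (by simpa using hy.trans_le (min_le_left _ _))) hyH

/-- Implicit multifunction estimate from openness of `H` with respect to `x`
uniformly in `p` around `(x₀, p₀, 0)`. -/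
theorem implicit_multifunction_estimate
    {X P Y : Type*} [MetricSpace X] [MetricSpace P]
    [NormedAddCommGroup Y] [NormedSpace ℝ Y]
    (H : X → P → Set Y) (x₀ : X) (p₀ : P) (h0 : (0:Y) ∈ H x₀ p₀) (c : ℝ) (hc : 0 < c)
    (hopen : ∃ ε > 0, ∃ U ∈ nhds x₀, ∃ V ∈ nhds p₀, ∃ W ∈ nhds (0:Y),
      ∀ ρ ∈ Ioo (0:ℝ) ε, ∀ p ∈ V, ∀ x ∈ U, ∀ y ∈ W, y ∈ H x p →
        ball y (ρ * c) ⊆ ⋃ x' ∈ ball x ρ, H x' p) :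
    ∃ α > 0, ∃ β > 0, ∃ γ > 0, ∀ x ∈ ball x₀ α, ∀ p ∈ ball p₀ β,
      EMetric.infEdist x {x' | (0:Y) ∈ H x' p} ≤
        ENNReal.ofReal c⁻¹ * EMetric.infEdist (0:Y) (H x p ∩ ball (0:Y) γ) :=
  implicit_multifunction_estimate_general H x₀ p₀ c hc hopen
end

section
/- Let X, P be metric spaces, Y a normed space, H : X × P ⇉ Y with 0 ∈ H(x̄,p̄), and S(p) := {x : 0 ∈ H(x,p)}. If H is open at linear rate c > 0 with respect to x uniformly in p around (x̄,p̄,0) and Lipschitz-like with respect to p uniformly in x around (x̄,p̄,0) with constant l, then the implicit multifunction S is Lipschitz-like around (p̄, x̄) with constant c⁻¹ l. -/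
open Set Metric Pointwise Filter

/-! The Lipschitz-like property in `p` moves a point `x ∈ S(p₁)` to a value `a ∈ H(x, p₂)` with
`‖a‖ ≤ l d(p₁, p₂)`. Openness of `H(·, p₂)` at rate `c` around `a` then reaches the value `0`
from some `x'` within distance slightly more than `‖a‖ / c` of `x`, i.e. `x' ∈ S(p₂)`. -/

theorem exists_mem_norm_le_of_zero_mem_add_smul_unitClosedBall {𝕜 E : Type*}
    [NormedField 𝕜] [NormedAddCommGroup E] [NormedSpace 𝕜 E] {A : Set E} {r : 𝕜}
    (h : (0 : E) ∈ A + r • closedBall (0 : E) 1) : ∃ a ∈ A, ‖a‖ ≤ ‖r‖ := by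
  rw [smul_unitClosedBall] at h
  obtain ⟨a, ha, b, hb, hab⟩ := h
  refine ⟨a, ha, ?_⟩
  rwa [eq_neg_of_add_eq_zero_left hab, norm_neg, ← mem_closedBall_zero_iff]

theorem Metric.infEDist_le_ofReal_of_forall_Ioo {X : Type*} [PseudoMetricSpace X]
    {s : Set X} {x : X} {r ε : ℝ} (hr : r < ε)
    (h : ∀ ρ ∈ Ioo r ε, ∃ x' ∈ s, dist x x' < ρ) :
    Metric.infEDist x s ≤ ENNReal.ofReal r := by
  refine ge_of_tendsto (ENNReal.continuous_ofReal.continuousWithinAt (s := Ioi r))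
    (eventually_of_mem (Ioo_mem_nhdsGT hr) fun ρ hρ => ?_)
  obtain ⟨x', hx', hxx'⟩ := h ρ hρ
  calc Metric.infEDist x s ≤ edist x x' := Metric.infEDist_le_edist_of_mem hx'
    _ = ENNReal.ofReal (dist x x') := edist_dist x x'
    _ ≤ ENNReal.ofReal ρ := ENNReal.ofReal_le_ofReal hxx'.le

theorem infEDist_preimage_le_of_ball_subset_iUnion_ball {X Y : Type*} [PseudoMetricSpace X]
    [PseudoMetricSpace Y] {F : X → Set Y} {x : X} {y z : Y} {c ε : ℝ} (hc : 0 < c)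
    (hz : dist z y < ε * c)
    (hopen : ∀ ρ ∈ Ioo (0 : ℝ) ε, ball y (ρ * c) ⊆ ⋃ x' ∈ ball x ρ, F x') :
    Metric.infEDist x {x' | z ∈ F x'} ≤ ENNReal.ofReal (dist z y / c) := by
  refine Metric.infEDist_le_ofReal_of_forall_Ioo ((div_lt_iff₀ hc).2 hz) fun ρ hρ => ?_
  have hρ_pos : 0 < ρ := (div_nonneg dist_nonneg hc.le).trans_lt hρ.1
  have hz_mem : z ∈ ball y (ρ * c) := (div_lt_iff₀ hc).1 hρ.1
  obtain ⟨x', hx', hzx'⟩ := mem_iUnion₂.1 (hopen ρ ⟨hρ_pos, hρ.2⟩ hz_mem)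
  exact ⟨x', hzx', mem_ball'.1 hx'⟩

theorem implicit_multifunction_lipschitz_like_general
    {X P Y : Type*} [MetricSpace X] [MetricSpace P]
    [NormedAddCommGroup Y] [NormedSpace ℝ Y]
    (H : X → P → Set Y) (x₀ : X) (p₀ : P)
    (c l : ℝ) (hc : 0 < c) (hl : 0 < l)
    (hopen : ∃ ε > 0, ∃ U ∈ nhds x₀, ∃ V ∈ nhds p₀, ∃ W ∈ nhds (0:Y),
      ∀ ρ ∈ Ioo (0:ℝ) ε, ∀ p ∈ V, ∀ x ∈ U, ∀ y ∈ W, y ∈ H x p →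
        ball y (ρ * c) ⊆ ⋃ x' ∈ ball x ρ, H x' p)
    (hlip : ∃ U ∈ nhds x₀, ∃ V ∈ nhds p₀, ∃ W ∈ nhds (0:Y),
      ∀ x ∈ U, ∀ p₁ ∈ V, ∀ p₂ ∈ V,
        H x p₁ ∩ W ⊆ H x p₂ + (l * dist p₁ p₂) • Metric.closedBall (0:Y) 1) :
    ∃ V' ∈ nhds p₀, ∃ U' ∈ nhds x₀, ∀ p₁ ∈ V', ∀ p₂ ∈ V',
      ∀ x ∈ {x' | (0:Y) ∈ H x' p₁} ∩ U',
        EMetric.infEdist x {x' | (0:Y) ∈ H x' p₂} ≤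
          ENNReal.ofReal (c⁻¹ * l * dist p₁ p₂) := by
  obtain ⟨ε, hε, U₁, hU₁, V₁, hV₁, W₁, hW₁, hop⟩ := hopen
  obtain ⟨U₂, hU₂, V₂, hV₂, W₂, hW₂, hli⟩ := hlip
  obtain ⟨η, hη, hηW₁⟩ := Metric.mem_nhds_iff.1 hW₁
  set κ := min η (ε * c)
  have hκ : 0 < κ := lt_min hη (by positivity)
  refine ⟨V₁ ∩ V₂ ∩ ball p₀ (κ / l / 2), inter_mem (inter_mem hV₁ hV₂)
    (ball_mem_nhds _ (by positivity)), U₁ ∩ U₂, inter_mem hU₁ hU₂, ?_⟩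
  rintro p₁ ⟨⟨-, hp₁V₂⟩, hp₁⟩ p₂ ⟨⟨hp₂V₁, hp₂V₂⟩, hp₂⟩ x ⟨hxS, hxU₁, hxU₂⟩
  have hld : l * dist p₁ p₂ < κ := by
    rw [← lt_div_iff₀' hl]
    linarith [dist_triangle_right p₁ p₂ p₀, mem_ball.1 hp₁, mem_ball.1 hp₂]
  obtain ⟨a, ha, ha_norm⟩ := exists_mem_norm_le_of_zero_mem_add_smul_unitClosedBall
    (hli x hxU₂ p₁ hp₁V₂ p₂ hp₂V₂ ⟨hxS, mem_of_mem_nhds hW₂⟩)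
  rw [Real.norm_of_nonneg (by positivity)] at ha_norm
  have haW₁ : a ∈ W₁ := hηW₁ (mem_ball_zero_iff.2 (by linarith [min_le_left η (ε * c)]))
  have h0a : dist 0 a < ε * c := by
    rw [dist_zero_left]
    linarith [min_le_right η (ε * c)]
  calc Metric.infEDist x {x' | (0:Y) ∈ H x' p₂}
      ≤ ENNReal.ofReal (dist 0 a / c) := infEDist_preimage_le_of_ball_subset_iUnion_ball hc h0a
        fun ρ hρ => hop ρ hρ p₂ hp₂V₁ x hxU₁ a haW₁ ha
    _ ≤ ENNReal.ofReal (c⁻¹ * l * dist p₁ p₂) := by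
        refine ENNReal.ofReal_le_ofReal ?_
        rw [dist_zero_left, mul_assoc, inv_mul_eq_div]
        exact div_le_div_of_nonneg_right ha_norm hc.le

/-- If `H` is open at linear rate `c` with respect to `x` uniformly in `p` and
Lipschitz-like with respect to `p` uniformly in `x` with constant `l` around
`(x₀, p₀, 0)`, then the implicit multifunction `S` is Lipschitz-like around
`(p₀, x₀)` with constant `c⁻¹ * l`. -/
theorem implicit_multifunction_lipschitz_like
    {X P Y : Type*} [MetricSpace X] [MetricSpace P]
    [NormedAddCommGroup Y] [NormedSpace ℝ Y]
    (H : X → P → Set Y) (x₀ : X) (p₀ : P) (h0 : (0:Y) ∈ H x₀ p₀)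
    (c l : ℝ) (hc : 0 < c) (hl : 0 < l)
    (hopen : ∃ ε > 0, ∃ U ∈ nhds x₀, ∃ V ∈ nhds p₀, ∃ W ∈ nhds (0:Y),
      ∀ ρ ∈ Ioo (0:ℝ) ε, ∀ p ∈ V, ∀ x ∈ U, ∀ y ∈ W, y ∈ H x p →
        ball y (ρ * c) ⊆ ⋃ x' ∈ ball x ρ, H x' p)
    (hlip : ∃ U ∈ nhds x₀, ∃ V ∈ nhds p₀, ∃ W ∈ nhds (0:Y),
      ∀ x ∈ U, ∀ p₁ ∈ V, ∀ p₂ ∈ V,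
        H x p₁ ∩ W ⊆ H x p₂ + (l * dist p₁ p₂) • Metric.closedBall (0:Y) 1) :
    ∃ V' ∈ nhds p₀, ∃ U' ∈ nhds x₀, ∀ p₁ ∈ V', ∀ p₂ ∈ V',
      ∀ x ∈ {x' | (0:Y) ∈ H x' p₁} ∩ U',
        EMetric.infEdist x {x' | (0:Y) ∈ H x' p₂} ≤
          ENNReal.ofReal (c⁻¹ * l * dist p₁ p₂) :=
  implicit_multifunction_lipschitz_like_general H x₀ p₀ c l hc hl hopen hlip
end

section
/- Let X, P be metric spaces, Y a normed space, H : X × P ⇉ Y with 0 ∈ H(x̄,p̄), S(p) := {x : 0 ∈ H(x,p)}. If H is open at linear rate c > 0 with respect to p uniformly in x around (x̄,p̄,0), then there exist α, β, γ > 0 such that for every (x,p) ∈ B(x̄,α) × B(p̄,β), d(p, S⁻¹(x)) ≤ c⁻¹ d(0, H(x,p) ∩ B(0,γ)). -/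
/-!
Fix `(x, p)` near `(x₀, p₀)` and `y ∈ H x p` small. For every `ρ > ‖y‖ / c` below the openness
radius, `0 ∈ ball y (ρ * c) ⊆ H x (ball p ρ)`, so some `p'` with `dist p p' < ρ` satisfies
`0 ∈ H x p'`. Letting `ρ ↓ ‖y‖ / c` gives `d(p, S⁻¹ x) ≤ c⁻¹ ‖y‖`, and taking the infimum over
`y` gives the estimate.
-/

open Set Metric Filter Topology

theorem Metric.infEDist_le_ofReal_of_forall_mem_Ioo {P : Type*} [PseudoMetricSpace P]
    {S : Set P} {p : P} {r ε : ℝ} (hr : r < ε) (h : ∀ ρ ∈ Ioo r ε, ∃ p' ∈ ball p ρ, p' ∈ S) :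
    infEDist p S ≤ ENNReal.ofReal r := by
  refine ge_of_tendsto (ENNReal.continuous_ofReal.continuousWithinAt (s := Ioi r)).tendsto ?_
  filter_upwards [Ioo_mem_nhdsGT hr] with ρ hρ
  obtain ⟨p', hp', hp'S⟩ := h ρ hρ
  calc infEDist p S ≤ edist p p' := infEDist_le_edist_of_mem hp'S
    _ ≤ ENNReal.ofReal ρ := by
      rw [edist_dist, dist_comm]
      exact ENNReal.ofReal_le_ofReal (mem_ball.1 hp').le

theorem Metric.infEDist_le_mul_infEDist_of_forall {α β : Type*} [PseudoEMetricSpace α]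
    [PseudoEMetricSpace β] {a : α} {s : Set α} {b : β} {t : Set β} {k : ENNReal}
    (hk₀ : k ≠ 0) (hk : k ≠ ⊤) (h : ∀ y ∈ t, infEDist a s ≤ k * edist b y) :
    infEDist a s ≤ k * infEDist b t := by
  rw [mul_comm, ← ENNReal.div_le_iff_le_mul (.inl hk₀) (.inl hk), le_infEDist]
  intro y hy
  rw [ENNReal.div_le_iff_le_mul (.inl hk₀) (.inl hk), mul_comm]
  exact h y hy

theorem infEDist_zeros_le_of_ball_subset_image_ball {P Y : Type*} [PseudoMetricSpace P]
    [SeminormedAddCommGroup Y] (F : P → Set Y) {p : P} {y : Y} {c ε : ℝ} (hc : 0 < c)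
    (hy : ‖y‖ < c * ε) (hF : ∀ ρ ∈ Ioo (0 : ℝ) ε, ball y (ρ * c) ⊆ ⋃ p' ∈ ball p ρ, F p') :
    infEDist p {p' | (0 : Y) ∈ F p'} ≤ ENNReal.ofReal c⁻¹ * edist (0 : Y) y := by
  have hyc : ‖y‖ / c < ε := (div_lt_iff₀' hc).2 hy
  rw [edist_dist, dist_zero_left, ← ENNReal.ofReal_mul (inv_nonneg.2 hc.le), inv_mul_eq_div]
  refine infEDist_le_ofReal_of_forall_mem_Ioo hyc fun ρ hρ => ?_
  have hρ₀ : 0 < ρ := (div_nonneg (norm_nonneg y) hc.le).trans_lt hρ.1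
  have h0 : (0 : Y) ∈ ball y (ρ * c) := by
    rw [mem_ball, dist_zero_left]
    exact (div_lt_iff₀ hc).1 hρ.1
  simpa only [mem_iUnion, exists_prop, mem_setOf_eq] using hF ρ ⟨hρ₀, hρ.2⟩ h0

theorem implicit_multifunction_estimate_inverse_general
    {X P Y : Type*} [MetricSpace X] [MetricSpace P]
    [NormedAddCommGroup Y] [NormedSpace ℝ Y]
    (H : X → P → Set Y) (x₀ : X) (p₀ : P) (c : ℝ) (hc : 0 < c)
    (hopen : ∃ ε > 0, ∃ U ∈ nhds x₀, ∃ V ∈ nhds p₀, ∃ W ∈ nhds (0:Y),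
      ∀ ρ ∈ Ioo (0:ℝ) ε, ∀ x ∈ U, ∀ p ∈ V, ∀ y ∈ W, y ∈ H x p →
        ball y (ρ * c) ⊆ ⋃ p' ∈ ball p ρ, H x p') :
    ∃ α > 0, ∃ β > 0, ∃ γ > 0, ∀ x ∈ ball x₀ α, ∀ p ∈ ball p₀ β,
      EMetric.infEdist p {p' | (0:Y) ∈ H x p'} ≤
        ENNReal.ofReal c⁻¹ * EMetric.infEdist (0:Y) (H x p ∩ ball (0:Y) γ) := by
  obtain ⟨ε, hε, U, hU, V, hV, W, hW, hopen⟩ := hopen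
  obtain ⟨α, hα, hαU⟩ := Metric.mem_nhds_iff.1 hU
  obtain ⟨β, hβ, hβV⟩ := Metric.mem_nhds_iff.1 hV
  obtain ⟨γ, hγ, hγW⟩ := Metric.mem_nhds_iff.1 hW
  refine ⟨α, hα, β, hβ, min γ (c * ε), lt_min hγ (mul_pos hc hε), fun x hx p hp => ?_⟩
  have hc' : ENNReal.ofReal c⁻¹ ≠ 0 := (ENNReal.ofReal_pos.2 (inv_pos.2 hc)).ne'
  refine infEDist_le_mul_infEDist_of_forall hc' ENNReal.ofReal_ne_top fun y ⟨hyH, hy⟩ => ?_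
  rw [mem_ball_zero_iff, lt_min_iff] at hy
  refine infEDist_zeros_le_of_ball_subset_image_ball (H x) hc hy.2 fun ρ hρ => ?_
  exact hopen ρ hρ x (hαU hx) p (hβV hp) y (hγW (mem_ball_zero_iff.2 hy.1)) hyH

/-- Implicit multifunction estimate from openness of `H` with respect to `p`
uniformly in `x` around `(x₀, p₀, 0)`. -/
theorem implicit_multifunction_estimate_inverse
    {X P Y : Type*} [MetricSpace X] [MetricSpace P]
    [NormedAddCommGroup Y] [NormedSpace ℝ Y]
    (H : X → P → Set Y) (x₀ : X) (p₀ : P) (h0 : (0:Y) ∈ H x₀ p₀) (c : ℝ) (hc : 0 < c)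
    (hopen : ∃ ε > 0, ∃ U ∈ nhds x₀, ∃ V ∈ nhds p₀, ∃ W ∈ nhds (0:Y),
      ∀ ρ ∈ Ioo (0:ℝ) ε, ∀ x ∈ U, ∀ p ∈ V, ∀ y ∈ W, y ∈ H x p →
        ball y (ρ * c) ⊆ ⋃ p' ∈ ball p ρ, H x p') :
    ∃ α > 0, ∃ β > 0, ∃ γ > 0, ∀ x ∈ ball x₀ α, ∀ p ∈ ball p₀ β,
      EMetric.infEdist p {p' | (0:Y) ∈ H x p'} ≤
        ENNReal.ofReal c⁻¹ * EMetric.infEdist (0:Y) (H x p ∩ ball (0:Y) γ) :=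
  implicit_multifunction_estimate_inverse_general H x₀ p₀ c hc hopen
end

section
/- Let X, P be metric spaces, Y a normed space, H : X × P ⇉ Y with 0 ∈ H(x̄,p̄), S(p) := {x : 0 ∈ H(x,p)}. If H is open at linear rate c > 0 with respect to p uniformly in x around (x̄,p̄,0) and Lipschitz-like with respect to x uniformly in p around (x̄,p̄,0) with constant l, then S is metrically regular around (p̄, x̄) with constant c⁻¹ l, i.e., there exist neighborhoods V of p̄, U of x̄ such that for all (p,x) ∈ V × U, d(p, S⁻¹(x)) ≤ c⁻¹ l · d(x, S(p)). -/
/-!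
Fix `x` near `x̄` and `p` near `p̄`, and let `x'` be a solution for the parameter `p`. The
Lipschitz-like property turns `0 ∈ H x' p` into a point `y ∈ H x p` with `‖y‖ ≤ l · d(x', x)`, and
openness at rate `c` then moves `p` by less than any `ρ > c⁻¹ l · d(x', x)` to a solution for `x`.
This bounds `d(p, S⁻¹ x)` by `c⁻¹ l · d(x, x')` as long as `x'` stays in a small ball `B(x, t)`.
Solutions `x'` outside that ball are handled by the a priori bound obtained in the same way from
`0 ∈ H x̄ p̄`, which is at most `c⁻¹ l · t` by the choice of `t`.
-/

open Set Metric Pointwise Filter Topology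

def IsOpenAtLinearRateOn {X P Y : Type*} [PseudoMetricSpace P] [PseudoMetricSpace Y]
    (H : X → P → Set Y) (c ε : ℝ) (U : Set X) (V : Set P) (W : Set Y) : Prop :=
  ∀ ρ ∈ Ioo (0 : ℝ) ε, ∀ x ∈ U, ∀ p ∈ V, ∀ y ∈ W, y ∈ H x p →
    ball y (ρ * c) ⊆ ⋃ p' ∈ ball p ρ, H x p'

lemma IsOpenAtLinearRateOn.mono {X P Y : Type*} [PseudoMetricSpace P] [PseudoMetricSpace Y]
    {H : X → P → Set Y} {c ε : ℝ} {U U' : Set X} {V V' : Set P} {W : Set Y}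
    (h : IsOpenAtLinearRateOn H c ε U V W) (hU : U' ⊆ U) (hV : V' ⊆ V) :
    IsOpenAtLinearRateOn H c ε U' V' W :=
  fun ρ hρ x hx p hp ↦ h ρ hρ x (hU hx) p (hV hp)

def IsLipschitzLikeOn {X P Y : Type*} [PseudoMetricSpace X] [SeminormedAddCommGroup Y]
    [NormedSpace ℝ Y] (H : X → P → Set Y) (l : ℝ) (U : Set X) (V : Set P) (W : Set Y) : Prop :=
  ∀ p ∈ V, ∀ x₁ ∈ U, ∀ x₂ ∈ U, H x₁ p ∩ W ⊆ H x₂ p + (l * dist x₁ x₂) • closedBall (0 : Y) 1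

lemma IsLipschitzLikeOn.mono {X P Y : Type*} [PseudoMetricSpace X] [SeminormedAddCommGroup Y]
    [NormedSpace ℝ Y] {H : X → P → Set Y} {l : ℝ} {U U' : Set X} {V V' : Set P} {W : Set Y}
    (h : IsLipschitzLikeOn H l U V W) (hU : U' ⊆ U) (hV : V' ⊆ V) :
    IsLipschitzLikeOn H l U' V' W :=
  fun p hp x₁ hx₁ x₂ hx₂ ↦ h p (hV hp) x₁ (hU hx₁) x₂ (hU hx₂)

lemma le_ofReal_mul_infEDist_of_forall_near {X : Type*} [PseudoMetricSpace X] {x : X}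
    {S : Set X} {A : ENNReal} {K t : ℝ} (hK : 0 < K) (hfar : A ≤ ENNReal.ofReal (K * t))
    (hnear : ∀ x' ∈ S, dist x x' < t → A ≤ ENNReal.ofReal (K * dist x x')) :
    A ≤ ENNReal.ofReal K * infEDist x S := by
  have hK₀ : ENNReal.ofReal K ≠ 0 := ENNReal.ofReal_pos.2 hK |>.ne'
  rw [mul_comm, ← ENNReal.div_le_iff_le_mul (.inl hK₀) (.inl ENNReal.ofReal_ne_top), le_infEDist]
  intro x' hx'
  rw [ENNReal.div_le_iff_le_mul (.inl hK₀) (.inl ENNReal.ofReal_ne_top), mul_comm, edist_dist,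
    ← ENNReal.ofReal_mul hK.le]
  rcases lt_or_ge (dist x x') t with hlt | hge
  · exact hnear x' hx' hlt
  · exact hfar.trans (ENNReal.ofReal_le_ofReal (by gcongr))

section

variable {P Y : Type*} [PseudoMetricSpace P] [SeminormedAddCommGroup Y]

lemma infEDist_le_of_ball_subset_biUnion {G : P → Set Y} {p : P} {y : Y} {c ε a : ℝ}
    (hc : 0 < c) (haε : a < ε) (hy : ‖y‖ ≤ c * a)
    (hG : ∀ ρ ∈ Ioo (0 : ℝ) ε, ball y (ρ * c) ⊆ ⋃ p' ∈ ball p ρ, G p') :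
    infEDist p {p' | (0 : Y) ∈ G p'} ≤ ENNReal.ofReal a := by
  have ha : 0 ≤ a := (mul_nonneg_iff_of_pos_left hc).1 ((norm_nonneg y).trans hy)
  refine ge_of_tendsto (x := 𝓝[>] a)
    ((ENNReal.continuous_ofReal.tendsto a).mono_left nhdsWithin_le_nhds) ?_
  filter_upwards [Ioo_mem_nhdsGT haε] with ρ hρ
  have h0 : (0 : Y) ∈ ball y (ρ * c) := by
    rw [mem_ball, dist_zero_left, mul_comm ρ]
    exact hy.trans_lt (mul_lt_mul_of_pos_left hρ.1 hc)
  obtain ⟨p', hp', hp'G⟩ := mem_iUnion₂.1 (hG ρ ⟨ha.trans_lt hρ.1, hρ.2⟩ h0)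
  calc infEDist p {p' | (0 : Y) ∈ G p'} ≤ edist p p' := infEDist_le_edist_of_mem hp'G
    _ ≤ ENNReal.ofReal ρ := by
      rw [edist_dist, dist_comm]
      exact ENNReal.ofReal_le_ofReal (mem_ball.1 hp').le

variable [NormedSpace ℝ Y]

lemma exists_norm_le_of_zero_mem_add_smul_unitClosedBall {A : Set Y} {r : ℝ} (hr : 0 ≤ r)
    (h : (0 : Y) ∈ A + r • closedBall 0 1) : ∃ y ∈ A, ‖y‖ ≤ r := by
  obtain ⟨y, hy, _, ⟨u, hu, rfl⟩, hyu⟩ := h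
  refine ⟨y, hy, ?_⟩
  rw [eq_neg_of_add_eq_zero_left hyu, norm_neg, norm_smul, Real.norm_of_nonneg hr]
  exact mul_le_of_le_one_right hr (mem_closedBall_zero_iff.1 hu)

end

section

variable {X P Y : Type*} [PseudoMetricSpace X] [PseudoMetricSpace P] [SeminormedAddCommGroup Y]
  [NormedSpace ℝ Y]

lemma infEDist_solutions_le_mul_dist {H : X → P → Set Y} {U : Set X} {V : Set P} {W W' : Set Y}
    {c l ε : ℝ} (hc : 0 < c) (hl : 0 ≤ l) (hopen : IsOpenAtLinearRateOn H c ε U V W)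
    (hlip : IsLipschitzLikeOn H l U V W') (h0W' : (0 : Y) ∈ W') {x x' : X} (hx : x ∈ U)
    (hx' : x' ∈ U) {p : P} (hp : p ∈ V) (h0 : (0 : Y) ∈ H x' p)
    (hW : closedBall (0 : Y) (l * dist x' x) ⊆ W) (hε : c⁻¹ * l * dist x' x < ε) :
    infEDist p {p' | (0 : Y) ∈ H x p'} ≤ ENNReal.ofReal (c⁻¹ * l * dist x' x) := by
  obtain ⟨y, hy, hny⟩ := exists_norm_le_of_zero_mem_add_smul_unitClosedBall (by positivity)
    (hlip p hp x' hx' x hx ⟨h0, h0W'⟩)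
  have hcy : ‖y‖ ≤ c * (c⁻¹ * l * dist x' x) := by
    rwa [← mul_assoc, ← mul_assoc, mul_inv_cancel₀ hc.ne', one_mul]
  exact infEDist_le_of_ball_subset_biUnion hc hε hcy
    fun ρ hρ ↦ hopen ρ hρ x hx p hp y (hW (mem_closedBall_zero_iff.2 hny)) hy

lemma infEDist_solutions_le_mul_infEDist {H : X → P → Set Y} {U : Set X} {V : Set P}
    {W W' : Set Y} {c l ε s t : ℝ} (hc : 0 < c) (hl : 0 < l)
    (hopen : IsOpenAtLinearRateOn H c ε U V W) (hlip : IsLipschitzLikeOn H l U V W')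
    (h0W' : (0 : Y) ∈ W') {x₀ x : X} {p₀ p : P} (h0 : (0 : Y) ∈ H x₀ p₀)
    (hU : closedBall x₀ (t + s) ⊆ U) (hV : closedBall p₀ s ⊆ V)
    (hW : closedBall (0 : Y) (l * t) ⊆ W) (hε : c⁻¹ * l * t < ε)
    (hst : s + c⁻¹ * l * s ≤ c⁻¹ * l * t) (hx : dist x x₀ < s) (hp : dist p p₀ < s) :
    infEDist p {p' | (0 : Y) ∈ H x p'} ≤
      ENNReal.ofReal (c⁻¹ * l) * infEDist x {x' | (0 : Y) ∈ H x' p} := by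
  set K := c⁻¹ * l
  have hK : 0 < K := by positivity
  have hs : 0 ≤ s := dist_nonneg.trans hx.le
  have hst' : s ≤ t := le_of_mul_le_mul_left (by linarith) hK
  have hUx : ∀ {x'}, dist x' x ≤ t → x' ∈ U := fun hx' ↦
    hU <| mem_closedBall.2 <| (dist_triangle _ x _).trans (by linarith)
  have key : ∀ {x' p'}, dist p' p₀ ≤ s → (0 : Y) ∈ H x' p' → dist x' x ≤ t →
      infEDist p' {p'' | (0 : Y) ∈ H x p''} ≤ ENNReal.ofReal (K * dist x' x) :=
    fun hp' h0' hx' ↦ infEDist_solutions_le_mul_dist hc hl.le hopen hlip h0W'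
      (hUx (by rw [dist_self]; linarith)) (hUx hx') (hV (mem_closedBall.2 hp')) h0'
      ((closedBall_subset_closedBall (by gcongr)).trans hW)
      ((mul_le_mul_of_nonneg_left hx' hK.le).trans_lt hε)
  refine le_ofReal_mul_infEDist_of_forall_near (t := t) hK ?_ fun x' hx' hxx' ↦ ?_
  · calc infEDist p {p' | (0 : Y) ∈ H x p'}
        ≤ infEDist p₀ {p' | (0 : Y) ∈ H x p'} + edist p p₀ := infEDist_le_infEDist_add_edist
      _ ≤ ENNReal.ofReal (K * dist x₀ x) + ENNReal.ofReal s :=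
        add_le_add (key (by rw [dist_self]; exact hs) h0 (by rw [dist_comm]; linarith))
          (edist_lt_ofReal.2 hp).le
      _ ≤ ENNReal.ofReal (K * t) := by
        rw [← ENNReal.ofReal_add (by positivity) hs, dist_comm]
        exact ENNReal.ofReal_le_ofReal (by linarith [mul_le_mul_of_nonneg_left hx.le hK.le])
  · rw [dist_comm] at hxx' ⊢
    exact key hp.le hx' hxx'.le

end

/-- If `H` is open at linear rate `c` with respect to `p` uniformly in `x` and
Lipschitz-like with respect to `x` uniformly in `p` with constant `l` around
`(x₀, p₀, 0)`, then the implicit multifunction `S` is metrically regular around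
`(p₀, x₀)` with constant `c⁻¹ * l`. -/
theorem implicit_multifunction_metrically_regular
    {X P Y : Type*} [MetricSpace X] [MetricSpace P]
    [NormedAddCommGroup Y] [NormedSpace ℝ Y]
    (H : X → P → Set Y) (x₀ : X) (p₀ : P) (h0 : (0:Y) ∈ H x₀ p₀)
    (c l : ℝ) (hc : 0 < c) (hl : 0 < l)
    (hopen : ∃ ε > 0, ∃ U ∈ nhds x₀, ∃ V ∈ nhds p₀, ∃ W ∈ nhds (0:Y),
      ∀ ρ ∈ Ioo (0:ℝ) ε, ∀ x ∈ U, ∀ p ∈ V, ∀ y ∈ W, y ∈ H x p →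
        ball y (ρ * c) ⊆ ⋃ p' ∈ ball p ρ, H x p')
    (hlip : ∃ U ∈ nhds x₀, ∃ V ∈ nhds p₀, ∃ W ∈ nhds (0:Y),
      ∀ p ∈ V, ∀ x₁ ∈ U, ∀ x₂ ∈ U,
        H x₁ p ∩ W ⊆ H x₂ p + (l * dist x₁ x₂) • Metric.closedBall (0:Y) 1) :
    ∃ V ∈ nhds p₀, ∃ U ∈ nhds x₀, ∀ p ∈ V, ∀ x ∈ U,
      EMetric.infEdist p {p' | (0:Y) ∈ H x p'} ≤
        ENNReal.ofReal (c⁻¹ * l) * EMetric.infEdist x {x' | (0:Y) ∈ H x' p} := by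
  obtain ⟨ε, hε, U₁, hU₁, V₁, hV₁, W₁, hW₁, hop⟩ := hopen
  obtain ⟨U₂, hU₂, V₂, hV₂, W₂, hW₂, hli⟩ := hlip
  set K := c⁻¹ * l
  have hK : 0 < K := by positivity
  -- `t = (K⁻¹ + 1) * s` is chosen so that `K * t = s + K * s`
  have hsmall : ∀ᶠ s in 𝓝 (0 : ℝ), closedBall x₀ ((K⁻¹ + 1) * s + s) ⊆ U₁ ∩ U₂ ∧
      closedBall p₀ s ⊆ V₁ ∩ V₂ ∧ closedBall (0 : Y) (l * ((K⁻¹ + 1) * s)) ⊆ W₁ ∧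
      K * ((K⁻¹ + 1) * s) < ε :=
    ((Continuous.tendsto' (by fun_prop) 0 0 (by simp)).eventually
      (eventually_closedBall_subset (inter_mem hU₁ hU₂))).and <|
    ((Continuous.tendsto' (by fun_prop) 0 0 (by simp)).eventually
      (eventually_closedBall_subset (inter_mem hV₁ hV₂))).and <|
    ((Continuous.tendsto' (by fun_prop) 0 0 (by simp)).eventually
      (eventually_closedBall_subset hW₁)).and <|
    (Continuous.tendsto' (by fun_prop) 0 0 (by simp)).eventually_lt_const hε
  obtain ⟨s, ⟨hU, hV, hW, hsε⟩, hs⟩ :=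
    ((hsmall.filter_mono nhdsWithin_le_nhds).and (self_mem_nhdsWithin (s := Ioi 0))).exists
  have hKt : K * ((K⁻¹ + 1) * s) = s + K * s := by
    rw [← mul_assoc, mul_add, mul_inv_cancel₀ hK.ne', mul_one, add_mul, one_mul]
  refine ⟨ball p₀ s, ball_mem_nhds _ hs, ball x₀ s, ball_mem_nhds _ hs, fun p hp x hx ↦ ?_⟩
  exact infEDist_solutions_le_mul_infEDist hc hl
    (IsOpenAtLinearRateOn.mono hop inter_subset_left inter_subset_left)
    (IsLipschitzLikeOn.mono hli inter_subset_right inter_subset_right) (mem_of_mem_nhds hW₂) h0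
    hU hV hW hsε hKt.ge hx hp
end

section
/- Let Y, Z, W be Banach spaces, G : Y × Z ⇉ W with w̄ ∈ G(ȳ,z̄), and Γ(z,w) := {y : w ∈ G(y,z)}. Suppose G is Lipschitz-like with respect to z uniformly in y around ((ȳ,z̄),w̄) with constant D ≥ 0, and G is open at linear rate with respect to y uniformly in z around ((ȳ,z̄),w̄) with constant C > 0. Then there exists γ > 0 such that for every (z,w),(z',w') ∈ D(z̄,γ) × D(w̄,γ) and every δ > 0, Γ(z,w) ∩ D(ȳ,γ) ⊆ Γ(z',w') + ((1+δ)/C)(D‖z−z'‖ + ‖w−w'‖)·D_Y. -/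
/-!
Given `y ∈ Γ(z,w)` near `ȳ`, Lipschitz-likeness in `z` yields `w₁ ∈ G(y,z')` with
`‖w - w₁‖ ≤ D‖z - z'‖`, so `w'` lies within `D‖z - z'‖ + ‖w - w'‖` of `w₁`. Openness at rate `C`
in `y` then produces `y' ∈ Γ(z',w')` with `‖y - y'‖` at most `(1 + δ)/C` times that distance;
the slack `δ > 0` absorbs the strictness of the balls in the openness hypothesis. All points
stay in the neighbourhoods where the two hypotheses apply once `γ` is small.
-/

open Set Metric Pointwise

theorem mem_add_smul_unitClosedBall_iff {E : Type*} [NormedAddCommGroup E] [NormedSpace ℝ E]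
    {s : Set E} {x : E} {r : ℝ} (hr : 0 ≤ r) :
    x ∈ s + r • closedBall (0 : E) 1 ↔ ∃ y ∈ s, ‖x - y‖ ≤ r := by
  rw [smul_unitClosedBall_of_nonneg hr]
  constructor
  · rintro ⟨y, hy, v, hv, rfl⟩
    exact ⟨y, hy, by simpa using hv⟩
  · rintro ⟨y, hy, hxy⟩
    exact ⟨y, hy, x - y, by simpa using hxy, add_sub_cancel y x⟩

theorem exists_mem_dist_le_of_linearOpenness {Y W : Type*} [PseudoMetricSpace Y] [MetricSpace W]
    {F : Y → Set W} {y₀ : Y} {w₀ : W} {C ε : ℝ} (hC : 0 < C)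
    (hopen : ∀ ρ ∈ Ioo (0:ℝ) ε, ∀ y ∈ ball y₀ ε, ∀ w ∈ ball w₀ ε, w ∈ F y →
      ball w (C * ρ) ⊆ ⋃ y' ∈ ball y ρ, F y')
    {y : Y} (hy : y ∈ ball y₀ ε) {w : W} (hw : w ∈ ball w₀ ε) (hwF : w ∈ F y)
    {w' : W} (hw' : dist w' w < C * ε) {δ : ℝ} (hδ : 0 < δ) :
    ∃ y', w' ∈ F y' ∧ dist y' y ≤ (1 + δ) * dist w' w / C := by
  obtain hzero | hpos := (dist_nonneg (x := w') (y := w)).eq_or_lt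
  · exact ⟨y, by rwa [dist_eq_zero.1 hzero.symm], by simp [← hzero]⟩
  obtain ⟨ρ, hρlow, hρhigh⟩ : ∃ ρ, dist w' w / C < ρ ∧ ρ < min ((1 + δ) * dist w' w / C) ε :=
    exists_between (lt_min (by gcongr; exact lt_mul_of_one_lt_left hpos (by linarith))
      ((div_lt_iff₀' hC).2 hw'))
  have hρ : ρ ∈ Ioo 0 ε :=
    ⟨(div_nonneg dist_nonneg hC.le).trans_lt hρlow, hρhigh.trans_le (min_le_right _ _)⟩
  have hw'ball : w' ∈ ball w (C * ρ) := mem_ball.2 ((div_lt_iff₀' hC).1 hρlow)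
  obtain ⟨y', hy', hw'F⟩ := mem_iUnion₂.1 (hopen ρ hρ y hy w hw hwF hw'ball)
  exact ⟨y', hw'F, (mem_ball.1 hy').le.trans (hρhigh.le.trans (min_le_left _ _))⟩

theorem implicit_inter_closedBall_subset_add_smul_unitClosedBall
    {Y Z W : Type*} [NormedAddCommGroup Y] [NormedSpace ℝ Y] [NormedAddCommGroup Z]
    [NormedAddCommGroup W] [NormedSpace ℝ W]
    {G : Y → Z → Set W} {y₀ : Y} {z₀ : Z} {w₀ : W} {D C a ε γ : ℝ} (hD : 0 ≤ D) (hC : 0 < C)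
    (hlip : ∀ y ∈ ball y₀ a, ∀ z ∈ ball z₀ a, ∀ z' ∈ ball z₀ a,
      G y z ∩ closedBall w₀ a ⊆ G y z' + (D * ‖z - z'‖) • closedBall (0:W) 1)
    (hopen : ∀ ρ ∈ Ioo (0:ℝ) ε, ∀ z ∈ ball z₀ ε, ∀ y ∈ ball y₀ ε, ∀ w' ∈ ball w₀ ε,
      w' ∈ G y z → ball w' (C * ρ) ⊆ ⋃ y' ∈ ball y ρ, G y' z)
    (hγa : (2 * D + 2) * γ < a) (hγε : (2 * D + 2) * γ < ε) (hγCε : (2 * D + 2) * γ < C * ε)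
    {z z' : Z} (hz : z ∈ closedBall z₀ γ) (hz' : z' ∈ closedBall z₀ γ)
    {w w' : W} (hw : w ∈ closedBall w₀ γ) (hw' : w' ∈ closedBall w₀ γ) {δ : ℝ} (hδ : 0 < δ) :
    {y | w ∈ G y z} ∩ closedBall y₀ γ ⊆
      {y | w' ∈ G y z'} + ((1 + δ) / C * (D * ‖z - z'‖ + ‖w - w'‖)) • closedBall (0:Y) 1 := by
  rintro y ⟨hwG, hy⟩
  have hγ : 0 ≤ γ := dist_nonneg.trans hz
  have hγ_le : γ ≤ (2 * D + 2) * γ := le_mul_of_one_le_left hγ (by linarith)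
  have hzz' : ‖z - z'‖ ≤ 2 * γ := by
    rw [← dist_eq_norm]; linarith [dist_triangle_right z z' z₀, mem_closedBall.1 hz,
      mem_closedBall.1 hz']
  have hww' : ‖w - w'‖ ≤ 2 * γ := by
    rw [← dist_eq_norm]; linarith [dist_triangle_right w w' w₀, mem_closedBall.1 hw,
      mem_closedBall.1 hw']
  have hDzz' : D * ‖z - z'‖ ≤ D * (2 * γ) := mul_le_mul_of_nonneg_left hzz' hD
  obtain ⟨w₁, hw₁G, hww₁⟩ : ∃ w₁ ∈ G y z', ‖w - w₁‖ ≤ D * ‖z - z'‖ :=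
    (mem_add_smul_unitClosedBall_iff (by positivity)).1 <|
      hlip y (closedBall_subset_ball (hγ_le.trans_lt hγa) hy)
        z (closedBall_subset_ball (hγ_le.trans_lt hγa) hz)
        z' (closedBall_subset_ball (hγ_le.trans_lt hγa) hz')
        ⟨hwG, closedBall_subset_closedBall (hγ_le.trans hγa.le) hw⟩
  have hw₁ : w₁ ∈ ball w₀ ε := by
    rw [mem_ball]
    linarith [dist_triangle_left w₁ w₀ w, mem_closedBall.1 hw, dist_eq_norm w w₁]
  have hw'w₁ : dist w' w₁ ≤ D * ‖z - z'‖ + ‖w - w'‖ := by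
    linarith [dist_triangle_left w' w₁ w, dist_eq_norm w w₁, dist_eq_norm w w']
  obtain ⟨y', hy'G, hyy'⟩ := exists_mem_dist_le_of_linearOpenness (F := fun y => G y z') hC
    (fun ρ hρ => hopen ρ hρ z' (closedBall_subset_ball (hγ_le.trans_lt hγε) hz'))
    (closedBall_subset_ball (hγ_le.trans_lt hγε) hy) hw₁ hw₁G (w' := w') (by linarith) hδ
  refine (mem_add_smul_unitClosedBall_iff (by positivity)).2 ⟨y', hy'G, ?_⟩
  calc ‖y - y'‖ = dist y' y := by rw [dist_comm, dist_eq_norm]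
    _ ≤ (1 + δ) * dist w' w₁ / C := hyy'
    _ ≤ (1 + δ) / C * (D * ‖z - z'‖ + ‖w - w'‖) := by
      rw [mul_div_right_comm]; gcongr

theorem implicit_gamma_lipschitz_like_general
    {Y Z W : Type*} [NormedAddCommGroup Y] [NormedSpace ℝ Y]
    [NormedAddCommGroup Z]
    [NormedAddCommGroup W] [NormedSpace ℝ W]
    (G : Y → Z → Set W) (y₀ : Y) (z₀ : Z) (w₀ : W)
    (D C : ℝ) (hD : 0 ≤ D) (hC : 0 < C)
    (hlip : ∃ a > 0, ∀ y ∈ ball y₀ a, ∀ z ∈ ball z₀ a, ∀ z' ∈ ball z₀ a,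
      G y z ∩ Metric.closedBall w₀ a ⊆
        G y z' + (D * ‖z - z'‖) • Metric.closedBall (0:W) 1)
    (hopen : ∃ ε > 0, ∀ ρ ∈ Ioo (0:ℝ) ε, ∀ z ∈ ball z₀ ε,
      ∀ y ∈ ball y₀ ε, ∀ w' ∈ ball w₀ ε, w' ∈ G y z →
        ball w' (C * ρ) ⊆ ⋃ y' ∈ ball y ρ, G y' z) :
    ∃ γ > 0, ∀ z ∈ Metric.closedBall z₀ γ, ∀ w ∈ Metric.closedBall w₀ γ,
      ∀ z' ∈ Metric.closedBall z₀ γ, ∀ w' ∈ Metric.closedBall w₀ γ, ∀ δ > 0,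
        {y | w ∈ G y z} ∩ Metric.closedBall y₀ γ ⊆
          {y | w' ∈ G y z'} +
            ((1 + δ) / C * (D * ‖z - z'‖ + ‖w - w'‖)) • Metric.closedBall (0:Y) 1 := by
  obtain ⟨a, ha, hlip⟩ := hlip
  obtain ⟨ε, hε, hopen⟩ := hopen
  obtain ⟨γ, hγ, hγmin⟩ := exists_pos_mul_lt (lt_min ha (lt_min hε (mul_pos hC hε))) (2 * D + 2)
  simp only [lt_min_iff] at hγmin
  obtain ⟨hγa, hγε, hγCε⟩ := hγmin
  exact ⟨γ, hγ, fun z hz w hw z' hz' w' hw' δ hδ =>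
    implicit_inter_closedBall_subset_add_smul_unitClosedBall hD hC hlip hopen hγa hγε hγCε
      hz hz' hw hw' hδ⟩

/-- Lipschitz-like behaviour of the implicit multifunction
`Γ(z,w) := {y : w ∈ G(y,z)}` under partial Lipschitz-likeness and partial openness of
`G` around `((y₀,z₀),w₀)`. -/
theorem implicit_gamma_lipschitz_like
    {Y Z W : Type*} [NormedAddCommGroup Y] [NormedSpace ℝ Y] [CompleteSpace Y]
    [NormedAddCommGroup Z] [NormedSpace ℝ Z] [CompleteSpace Z]
    [NormedAddCommGroup W] [NormedSpace ℝ W] [CompleteSpace W]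
    (G : Y → Z → Set W) (y₀ : Y) (z₀ : Z) (w₀ : W) (hw : w₀ ∈ G y₀ z₀)
    (D C : ℝ) (hD : 0 ≤ D) (hC : 0 < C)
    (hlip : ∃ a > 0, ∀ y ∈ ball y₀ a, ∀ z ∈ ball z₀ a, ∀ z' ∈ ball z₀ a,
      G y z ∩ Metric.closedBall w₀ a ⊆
        G y z' + (D * ‖z - z'‖) • Metric.closedBall (0:W) 1)
    (hopen : ∃ ε > 0, ∀ ρ ∈ Ioo (0:ℝ) ε, ∀ z ∈ ball z₀ ε,
      ∀ y ∈ ball y₀ ε, ∀ w' ∈ ball w₀ ε, w' ∈ G y z →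
        ball w' (C * ρ) ⊆ ⋃ y' ∈ ball y ρ, G y' z) :
    ∃ γ > 0, ∀ z ∈ Metric.closedBall z₀ γ, ∀ w ∈ Metric.closedBall w₀ γ,
      ∀ z' ∈ Metric.closedBall z₀ γ, ∀ w' ∈ Metric.closedBall w₀ γ, ∀ δ > 0,
        {y | w ∈ G y z} ∩ Metric.closedBall y₀ γ ⊆
          {y | w' ∈ G y z'} +
            ((1 + δ) / C * (D * ‖z - z'‖ + ‖w - w'‖)) • Metric.closedBall (0:Y) 1 :=
  implicit_gamma_lipschitz_like_general G y₀ z₀ w₀ D C hD hC hlip hopen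
end

section
/- Let X, Y, Z, W be Banach spaces, F₁ : X ⇉ Y, F₂ : X ⇉ Z, G : Y × Z ⇉ W, with ȳ ∈ F₁(x̄), z̄ ∈ F₂(x̄), w̄ ∈ G(ȳ,z̄), and define H(x) := G(F₁(x), F₂(x)) := ∪{G(y,z) : y ∈ F₁(x), z ∈ F₂(x)}. Assume: (i) Gr F₁, Gr F₂, Gr G are locally closed around the respective reference points; (ii) F₁ is open at linear rate L > 0 around (x̄,ȳ); (iii) F₂ is Lipschitz-like around (x̄,z̄) with constant M > 0; (iv) G is open at linear rate C > 0 with respect to y uniformly in z around ((ȳ,z̄),w̄); (v) G is Lipschitz-like with respect to z uniformly in y around ((ȳ,z̄),w̄) with constant D ≥ 0; (vi) LC − MD > 0. Then there exists ε > 0 such that for every ρ ∈ (0,ε), B(w̄, (LC−MD)ρ) ⊆ H(B(x̄,ρ)). -/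
/-!
Given `w` with `‖w - w₀‖ < (LC - MD) ρ`, build points `(xₙ, yₙ, zₙ, vₙ)` with `yₙ ∈ F₁ xₙ`,
`zₙ ∈ F₂ xₙ`, `vₙ ∈ G yₙ zₙ` and `vₙ → w`. In one step, openness of `G` in `y` (with `z = zₙ`
frozen) finds `y'` near `yₙ` with `w ∈ G y' zₙ`, openness of `F₁` lifts `y'` to some `x'` near
`xₙ`, Lipschitz-likeness of `F₂` gives `z' ∈ F₂ x'` with `‖z' - zₙ‖ ≤ M ‖x' - xₙ‖`, and
Lipschitz-likeness of `G` in `z` gives `v' ∈ G y' z'` with `‖w - v'‖ ≤ D ‖z' - zₙ‖`. A step of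
length `s` in `x` thus turns a residual `< LCs` into one `≤ MDs`, so residuals and steps decay
geometrically with any ratio `θ ∈ (MD/LC, 1)`. The total displacement of `x` is then `< ρ`, the
sequences converge by completeness, and the limits stay in the graphs since these are locally
closed.
-/

open Set Metric Pointwise Filter Topology

section SetValued

variable {X Y E : Type*}

def OpenAtRateOn [PseudoMetricSpace X] [PseudoMetricSpace Y] (F : X → Set Y) (L ε : ℝ)
    (U : Set X) (V : Set Y) : Prop :=
  ∀ ρ ∈ Ioo (0 : ℝ) ε, ∀ x ∈ U, ∀ y ∈ V, y ∈ F x → ball y (ρ * L) ⊆ ⋃ x' ∈ ball x ρ, F x'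

def LipschitzLikeOn [SeminormedAddCommGroup X] [SeminormedAddCommGroup E] [NormedSpace ℝ E]
    (F : X → Set E) (M : ℝ) (U : Set X) (V : Set E) : Prop :=
  ∀ x ∈ U, ∀ u ∈ U, F x ∩ V ⊆ F u + (M * ‖x - u‖) • closedBall (0 : E) 1

theorem exists_dist_le_of_mem_add_smul_closedBall [SeminormedAddCommGroup E] [NormedSpace ℝ E]
    {s : Set E} {v : E} {c : ℝ} (hc : 0 ≤ c) (hv : v ∈ s + c • closedBall (0 : E) 1) :
    ∃ u ∈ s, dist v u ≤ c := by
  obtain ⟨u, hu, _, ⟨e, he, rfl⟩, rfl⟩ := hv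
  refine ⟨u, hu, ?_⟩
  simpa [norm_smul, abs_of_nonneg hc] using
    mul_le_of_le_one_right hc (mem_closedBall_zero_iff.1 he)

namespace OpenAtRateOn

variable [PseudoMetricSpace X] [PseudoMetricSpace Y] {F : X → Set Y} {L ε : ℝ}
  {U U' : Set X} {V V' : Set Y}

theorem mono (h : OpenAtRateOn F L ε U V) (hU : U' ⊆ U) (hV : V' ⊆ V) :
    OpenAtRateOn F L ε U' V' :=
  fun ρ hρ x hx y hy => h ρ hρ x (hU hx) y (hV hy)

theorem exists_dist_lt (h : OpenAtRateOn F L ε U V) {ρ : ℝ} (hρ : ρ ∈ Ioo 0 ε) {x : X} {y y' : Y}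
    (hx : x ∈ U) (hy : y ∈ V) (hyx : y ∈ F x) (hy' : dist y' y < ρ * L) :
    ∃ x', dist x' x < ρ ∧ y' ∈ F x' := by
  simpa using h ρ hρ x hx y hy hyx (mem_ball.2 hy')

end OpenAtRateOn

namespace LipschitzLikeOn

variable [SeminormedAddCommGroup X] [SeminormedAddCommGroup E] [NormedSpace ℝ E]
  {F : X → Set E} {M : ℝ} {U U' : Set X} {V V' : Set E}

theorem mono (h : LipschitzLikeOn F M U V) (hU : U' ⊆ U) (hV : V' ⊆ V) :
    LipschitzLikeOn F M U' V' :=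
  fun x hx u hu => (inter_subset_inter_right _ hV).trans (h x (hU hx) u (hU hu))

theorem exists_dist_le (h : LipschitzLikeOn F M U V) (hM : 0 ≤ M) {x u : X} {z : E}
    (hx : x ∈ U) (hu : u ∈ U) (hzx : z ∈ F x) (hz : z ∈ V) :
    ∃ z' ∈ F u, dist z z' ≤ M * dist x u := by
  rw [dist_eq_norm x u]
  exact exists_dist_le_of_mem_add_smul_closedBall (by positivity) (h x hx u hu ⟨hzx, hz⟩)

end LipschitzLikeOn

end SetValued

theorem exists_seq_of_exists_succ {α : Type*} {P : ℕ → α → Prop} {R : ℕ → α → α → Prop} {a : α}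
    (h₀ : P 0 a) (h : ∀ n a, P n a → ∃ b, P (n + 1) b ∧ R n a b) :
    ∃ f : ℕ → α, f 0 = a ∧ ∀ n, P n (f n) ∧ R n (f n) (f (n + 1)) := by
  choose! g hg using h
  let f : ℕ → α := fun n => Nat.rec a (fun k b => g k b) n
  have hP : ∀ n, P n (f n) := fun n => by
    induction n with
    | zero => exact h₀
    | succ k ih => exact (hg k _ ih).1
  exact ⟨f, rfl, fun n => ⟨hP n, (hg n _ (hP n)).2⟩⟩

theorem IsClosed.mem_of_tendsto_of_dist_le {α : Type*} [PseudoMetricSpace α] {s : Set α}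
    {a b : α} {r : ℝ} (hs : IsClosed (s ∩ closedBall a r)) {u : ℕ → α}
    (hu : Tendsto u atTop (𝓝 b)) (hus : ∀ n, u n ∈ s) (hur : ∀ n, dist (u n) a ≤ r) : b ∈ s :=
  (hs.mem_of_tendsto hu (Eventually.of_forall fun n => ⟨hus n, hur n⟩)).1

theorem IsClosed.inter_closedBall_of_le {α : Type*} [PseudoMetricSpace α] {s : Set α} {a : α}
    {r δ : ℝ} (hs : IsClosed (s ∩ closedBall a r)) (hδ : δ ≤ r) :
    IsClosed (s ∩ closedBall a δ) := by
  have h := hs.inter (isClosed_closedBall (x := a) (ε := δ))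
  rwa [inter_assoc, inter_eq_right.2 (closedBall_subset_closedBall hδ)] at h

theorem Filter.Eventually.exists_pos {p : ℝ → Prop} (h : ∀ᶠ t in 𝓝 0, p t) : ∃ t > 0, p t :=
  (((h.filter_mono nhdsWithin_le_nhds).and self_mem_nhdsWithin).exists (f := 𝓝[>] 0)).imp
    fun _ ht => ⟨ht.2, ht.1⟩

theorem eventually_const_mul_lt (K : ℝ) {c : ℝ} (hc : 0 < c) :
    ∀ᶠ t in 𝓝 (0 : ℝ), K * t < c := by
  have : Tendsto (K * ·) (𝓝 (0 : ℝ)) (𝓝 0) := by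
    simpa using (tendsto_id (x := 𝓝 (0 : ℝ))).const_mul K
  exact this.eventually (eventually_lt_nhds hc)

theorem exists_radius_ratio_of_lt {a b d ρ : ℝ} (ha : 0 ≤ a) (hab : a < b) (hd : 0 ≤ d)
    (hdρ : d < (b - a) * ρ) :
    ∃ T θ, 0 < T ∧ T < ρ ∧ θ ∈ Ioo (0 : ℝ) 1 ∧ a < θ * b ∧ d < b * ((1 - θ) * T) := by
  have hb : 0 < b := ha.trans_lt hab
  obtain ⟨T, hdT, hTρ⟩ := exists_between ((div_lt_iff₀' (sub_pos.2 hab)).2 hdρ)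
  have hT : 0 < T := (div_nonneg hd (sub_pos.2 hab).le).trans_lt hdT
  rw [div_lt_iff₀' (sub_pos.2 hab)] at hdT
  have hlt : a / b < 1 - d / (b * T) := by
    have : a / b + d / (b * T) < 1 := by
      rw [div_add_div _ _ hb.ne' (by positivity), div_lt_one (by positivity)]
      nlinarith
    linarith
  obtain ⟨θ, haθ, hθd⟩ := exists_between hlt
  have hθ : 0 < θ := (div_nonneg ha hb.le).trans_lt haθ
  refine ⟨T, θ, hT, hTρ, ⟨hθ, hθd.trans_le (sub_le_self _ (by positivity))⟩,
    (div_lt_iff₀ hb).1 haθ, ?_⟩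
  have := (div_lt_iff₀ (by positivity)).1 (by linarith : d / (b * T) < 1 - θ)
  linarith

section Composition

variable {X Y Z W : Type*} [SeminormedAddCommGroup X] [PseudoMetricSpace Y]
  [SeminormedAddCommGroup Z] [NormedSpace ℝ Z] [SeminormedAddCommGroup W] [NormedSpace ℝ W]
  {F₁ : X → Set Y} {F₂ : X → Set Z} {G : Y → Z → Set W} {L M C D ε₁ ε₂ : ℝ}

theorem exists_step_of_dist_lt {U : Set X} {V : Set Y} {V' : Set Z} {V'' : Set W}
    (h₁ : OpenAtRateOn F₁ L ε₁ U V) (h₂ : LipschitzLikeOn F₂ M U V')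
    (hGo : ∀ z ∈ V', OpenAtRateOn (G · z) C ε₂ V V'')
    (hGl : ∀ y ∈ V, LipschitzLikeOn (G y) D V' V'') (hM : 0 ≤ M) (hD : 0 ≤ D)
    {x : X} {y : Y} {z : Z} {v w : W} {s : ℝ} (hs : s ∈ Ioo 0 ε₁) (hLs : L * s ∈ Ioo 0 ε₂)
    (hU : ball x s ⊆ U) (hV : ball y (L * s) ⊆ V) (hV' : closedBall z (M * s) ⊆ V')
    (hv : v ∈ V'') (hw : w ∈ V'')
    (hyx : y ∈ F₁ x) (hzx : z ∈ F₂ x) (hvyz : v ∈ G y z) (hwv : dist w v < L * s * C) :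
    ∃ x' y' z' v', y' ∈ F₁ x' ∧ z' ∈ F₂ x' ∧ v' ∈ G y' z' ∧
      dist x' x < s ∧ dist y' y < L * s ∧ dist z' z ≤ M * s ∧ dist w v' ≤ D * (M * s) := by
  have hxU : x ∈ U := hU (mem_ball_self hs.1)
  have hyV : y ∈ V := hV (mem_ball_self hLs.1)
  have hzV' : z ∈ V' := hV' (mem_closedBall_self (mul_nonneg hM hs.1.le))
  obtain ⟨y', hy'y, hwy'⟩ := (hGo z hzV').exists_dist_lt hLs hyV hv hvyz hwv
  obtain ⟨x', hx'x, hy'x'⟩ := h₁.exists_dist_lt hs hxU hyV hyx (by rwa [mul_comm])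
  obtain ⟨z', hz'x', hzz'⟩ := h₂.exists_dist_le hM hxU (hU hx'x) hzx hzV'
  have hz'z : dist z' z ≤ M * s := by
    rw [dist_comm]
    exact hzz'.trans (mul_le_mul_of_nonneg_left (dist_comm x x' ▸ hx'x.le) hM)
  obtain ⟨v', hv'y'z', hwv'⟩ := (hGl y' (hV hy'y)).exists_dist_le hD hzV' (hV' hz'z) hwy' hw
  exact ⟨x', y', z', v', hy'x', hz'x', hv'y'z', hx'x, hy'y, hz'z,
    hwv'.trans (mul_le_mul_of_nonneg_left (dist_comm z z' ▸ hz'z) hD)⟩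

theorem exists_step_within_closedBall {x₀ : X} {y₀ : Y} {z₀ : Z} {w₀ : W} {δ θ b s : ℝ}
    (h₁ : OpenAtRateOn F₁ L ε₁ (closedBall x₀ δ) (closedBall y₀ δ))
    (h₂ : LipschitzLikeOn F₂ M (closedBall x₀ δ) (closedBall z₀ δ))
    (hGo : ∀ z ∈ closedBall z₀ δ, OpenAtRateOn (G · z) C ε₂ (closedBall y₀ δ) (closedBall w₀ δ))
    (hGl : ∀ y ∈ closedBall y₀ δ, LipschitzLikeOn (G y) D (closedBall z₀ δ) (closedBall w₀ δ))
    (hL : 0 < L) (hM : 0 ≤ M) (hD : 0 ≤ D) (hθMD : M * D < θ * (L * C))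
    (hs : s ∈ Ioo 0 ε₁) (hLs : L * s < ε₂)
    (hbs : b + s ≤ δ) (hLbs : L * (b + s) ≤ δ) (hMbs : M * (b + s) ≤ δ)
    {x : X} {y : Y} {z : Z} {v w : W} (hwδ : dist w w₀ + L * s * C ≤ δ)
    (hyx : y ∈ F₁ x) (hzx : z ∈ F₂ x) (hvyz : v ∈ G y z)
    (hx : dist x x₀ ≤ b) (hy : dist y y₀ ≤ L * b) (hz : dist z z₀ ≤ M * b)
    (hwv : dist w v < L * s * C) :
    ∃ x' y' z' v', (y' ∈ F₁ x' ∧ z' ∈ F₂ x' ∧ v' ∈ G y' z' ∧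
      dist x' x₀ ≤ b + s ∧ dist y' y₀ ≤ L * (b + s) ∧ dist z' z₀ ≤ M * (b + s) ∧
      dist w v' < L * (θ * s) * C) ∧
      dist x' x < s ∧ dist y' y < L * s ∧ dist z' z ≤ M * s := by
  have hv : dist v w₀ ≤ δ := by linarith [dist_triangle_left v w₀ w]
  have hw : dist w w₀ ≤ δ := by linarith [dist_nonneg.trans_lt hwv]
  obtain ⟨x', y', z', v', hy'x', hz'x', hv', hx'x, hy'y, hz'z, hwv'⟩ :=
    exists_step_of_dist_lt h₁ h₂ hGo hGl hM hD hs ⟨mul_pos hL hs.1, hLs⟩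
      (ball_subset_closedBall.trans (closedBall_subset_closedBall' (by linarith)))
      (ball_subset_closedBall.trans (closedBall_subset_closedBall' (by linarith)))
      (closedBall_subset_closedBall' (by linarith)) hv hw hyx hzx hvyz hwv
  refine ⟨x', y', z', v', ⟨hy'x', hz'x', hv', ?_, ?_, ?_, ?_⟩, hx'x, hy'y, hz'z⟩
  · linarith [dist_triangle x' x x₀]
  · linarith [dist_triangle y' y y₀]
  · linarith [dist_triangle z' z z₀]
  · calc dist w v' ≤ M * D * s := by linarith
      _ < θ * (L * C) * s := mul_lt_mul_of_pos_right hθMD hs.1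
      _ = L * (θ * s) * C := by ring

theorem exists_iterates {x₀ : X} {y₀ : Y} {z₀ : Z} {w₀ w : W} {δ T θ : ℝ}
    (h₁ : OpenAtRateOn F₁ L ε₁ (closedBall x₀ δ) (closedBall y₀ δ))
    (h₂ : LipschitzLikeOn F₂ M (closedBall x₀ δ) (closedBall z₀ δ))
    (hGo : ∀ z ∈ closedBall z₀ δ, OpenAtRateOn (G · z) C ε₂ (closedBall y₀ δ) (closedBall w₀ δ))
    (hGl : ∀ y ∈ closedBall y₀ δ, LipschitzLikeOn (G y) D (closedBall z₀ δ) (closedBall w₀ δ))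
    (hL : 0 < L) (hM : 0 ≤ M) (hD : 0 ≤ D) (hθ : θ ∈ Ioo 0 1) (hθMD : M * D < θ * (L * C))
    (hT : 0 < T) (hT₁ : T < ε₁) (hT₂ : L * T < ε₂)
    (hTδ : T ≤ δ) (hLT : L * T ≤ δ) (hMT : M * T ≤ δ) (hCT : 2 * (L * C * T) ≤ δ)
    (hy₀ : y₀ ∈ F₁ x₀) (hz₀ : z₀ ∈ F₂ x₀) (hw₀ : w₀ ∈ G y₀ z₀)
    (hw : dist w w₀ < L * C * ((1 - θ) * T)) :
    ∃ (x : ℕ → X) (y : ℕ → Y) (z : ℕ → Z) (v : ℕ → W), x 0 = x₀ ∧ ∀ n,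
      y n ∈ F₁ (x n) ∧ z n ∈ F₂ (x n) ∧ v n ∈ G (y n) (z n) ∧
      dist (x n, y n) (x₀, y₀) ≤ δ ∧ dist (x n, z n) (x₀, z₀) ≤ δ ∧
      dist ((y n, z n), v n) ((y₀, z₀), w₀) ≤ δ ∧
      dist (x n) (x (n + 1)) ≤ (1 - θ) * T * θ ^ n ∧
      dist (y n) (y (n + 1)) ≤ L * ((1 - θ) * T) * θ ^ n ∧
      dist (z n) (z (n + 1)) ≤ M * ((1 - θ) * T) * θ ^ n ∧
      dist (v n) w ≤ L * C * ((1 - θ) * T) * θ ^ n := by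
  have hLC : 0 < L * C := (mul_pos_iff_of_pos_left hθ.1).1 ((mul_nonneg hM hD).trans_lt hθMD)
  have hθT : 0 < (1 - θ) * T := mul_pos (sub_pos.2 hθ.2) hT
  have hθT' : (1 - θ) * T ≤ T := mul_le_of_le_one_left hT.le (by linarith [hθ.1])
  -- `s n` is the step length of `x` at stage `n`, and `B n = s 0 + ⋯ + s (n - 1)`.
  set s : ℕ → ℝ := fun n => (1 - θ) * T * θ ^ n
  set B : ℕ → ℝ := fun n => T * (1 - θ ^ n)
  have hBs : ∀ n, B n + s n = B (n + 1) := fun n => by simp only [B, s, pow_succ]; ring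
  have hBT : ∀ n, B n ≤ T := fun n => by simp only [B]; nlinarith [pow_pos hθ.1 n]
  have hs : ∀ n, 0 < s n ∧ s n ≤ T := fun n =>
    ⟨mul_pos hθT (pow_pos hθ.1 n),
      (mul_le_of_le_one_right hθT.le (pow_le_one₀ hθ.1.le hθ.2.le)).trans hθT'⟩
  have hwδ : ∀ n, dist w w₀ + L * s n * C ≤ δ := fun n => by
    have : L * s n * C ≤ L * C * T := by
      rw [mul_right_comm]; exact mul_le_mul_of_nonneg_left (hs n).2 hLC.le
    nlinarith [mul_le_mul_of_nonneg_left hθT' hLC.le]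
  let P : ℕ → X × Y × Z × W → Prop := fun n p =>
    p.2.1 ∈ F₁ p.1 ∧ p.2.2.1 ∈ F₂ p.1 ∧ p.2.2.2 ∈ G p.2.1 p.2.2.1 ∧
    dist p.1 x₀ ≤ B n ∧ dist p.2.1 y₀ ≤ L * B n ∧ dist p.2.2.1 z₀ ≤ M * B n ∧
    dist w p.2.2.2 < L * s n * C
  let R : ℕ → X × Y × Z × W → X × Y × Z × W → Prop := fun n p q =>
    dist q.1 p.1 < s n ∧ dist q.2.1 p.2.1 < L * s n ∧ dist q.2.2.1 p.2.2.1 ≤ M * s n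
  have hP₀ : P 0 (x₀, y₀, z₀, w₀) := by
    refine ⟨hy₀, hz₀, hw₀, by simp [B], by simp [B], by simp [B], ?_⟩
    simpa [s, mul_right_comm _ C] using hw
  have hstep : ∀ n p, P n p → ∃ q, P (n + 1) q ∧ R n p q := by
    rintro n ⟨x, y, z, v⟩ ⟨hyx, hzx, hvyz, hx, hy, hz, hwv⟩
    have hB : B n + s n ≤ T := hBs n ▸ hBT (n + 1)
    have hs_succ : θ * s n = s (n + 1) := by simp only [s, pow_succ]; ring
    obtain ⟨x', y', z', v', hP, hR⟩ := exists_step_within_closedBall h₁ h₂ hGo hGl hL hM hD hθMD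
      ⟨(hs n).1, by linarith [(hs n).2]⟩ (by nlinarith [(hs n).2]) (by linarith)
      (by nlinarith) (by nlinarith) (hwδ n) hyx hzx hvyz hx hy hz hwv
    rw [hBs n, hs_succ] at hP
    exact ⟨(x', y', z', v'), hP, hR⟩
  obtain ⟨f, hf₀, hf⟩ := exists_seq_of_exists_succ hP₀ hstep
  refine ⟨fun n => (f n).1, fun n => (f n).2.1, fun n => (f n).2.2.1, fun n => (f n).2.2.2,
    by simp [hf₀], fun n => ?_⟩
  obtain ⟨⟨hyx, hzx, hvyz, hx, hy, hz, hwv⟩, hx', hy', hz'⟩ := hf n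
  have hxδ : dist (f n).1 x₀ ≤ δ := by linarith [hBT n]
  have hyδ : dist (f n).2.1 y₀ ≤ δ := by nlinarith [hBT n]
  have hzδ : dist (f n).2.2.1 z₀ ≤ δ := by nlinarith [hBT n]
  refine ⟨hyx, hzx, hvyz, max_le hxδ hyδ, max_le hxδ hzδ,
    max_le (max_le hyδ hzδ) (by linarith [dist_triangle_left (f n).2.2.2 w₀ w, hwδ n]),
    ?_, ?_, ?_, ?_⟩
  · rw [dist_comm]; exact hx'.le
  · rw [dist_comm, mul_assoc]; exact hy'.le
  · rw [dist_comm, mul_assoc]; exact hz'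
  · rw [dist_comm]; refine hwv.le.trans_eq ?_; simp only [s]; ring

theorem mem_composition_of_dist_lt [CompleteSpace X] [CompleteSpace Y] [CompleteSpace Z]
    {x₀ : X} {y₀ : Y} {z₀ : Z} {w₀ w : W} {δ T θ : ℝ}
    (hcl₁ : IsClosed ({q : X × Y | q.2 ∈ F₁ q.1} ∩ closedBall (x₀, y₀) δ))
    (hcl₂ : IsClosed ({q : X × Z | q.2 ∈ F₂ q.1} ∩ closedBall (x₀, z₀) δ))
    (hclG : IsClosed ({q : (Y × Z) × W | q.2 ∈ G q.1.1 q.1.2} ∩ closedBall ((y₀, z₀), w₀) δ))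
    (h₁ : OpenAtRateOn F₁ L ε₁ (closedBall x₀ δ) (closedBall y₀ δ))
    (h₂ : LipschitzLikeOn F₂ M (closedBall x₀ δ) (closedBall z₀ δ))
    (hGo : ∀ z ∈ closedBall z₀ δ, OpenAtRateOn (G · z) C ε₂ (closedBall y₀ δ) (closedBall w₀ δ))
    (hGl : ∀ y ∈ closedBall y₀ δ, LipschitzLikeOn (G y) D (closedBall z₀ δ) (closedBall w₀ δ))
    (hL : 0 < L) (hM : 0 ≤ M) (hD : 0 ≤ D) (hθ : θ ∈ Ioo 0 1) (hθMD : M * D < θ * (L * C))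
    (hT : 0 < T) (hT₁ : T < ε₁) (hT₂ : L * T < ε₂)
    (hTδ : T ≤ δ) (hLT : L * T ≤ δ) (hMT : M * T ≤ δ) (hCT : 2 * (L * C * T) ≤ δ)
    (hy₀ : y₀ ∈ F₁ x₀) (hz₀ : z₀ ∈ F₂ x₀) (hw₀ : w₀ ∈ G y₀ z₀)
    (hw : dist w w₀ < L * C * ((1 - θ) * T)) :
    w ∈ ⋃ x ∈ closedBall x₀ T, ⋃ y ∈ F₁ x, ⋃ z ∈ F₂ x, G y z := by
  obtain ⟨x, y, z, v, hx₀, hseq⟩ := exists_iterates h₁ h₂ hGo hGl hL hM hD hθ hθMD hT hT₁ hT₂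
    hTδ hLT hMT hCT hy₀ hz₀ hw₀ hw
  choose hyx hzx hvyz hxy hxz hyzv hxx hyy hzz hvw using hseq
  obtain ⟨x', hx'⟩ := cauchySeq_tendsto_of_complete (cauchySeq_of_le_geometric _ _ hθ.2 hxx)
  obtain ⟨y', hy'⟩ := cauchySeq_tendsto_of_complete (cauchySeq_of_le_geometric _ _ hθ.2 hyy)
  obtain ⟨z', hz'⟩ := cauchySeq_tendsto_of_complete (cauchySeq_of_le_geometric _ _ hθ.2 hzz)
  have hv : Tendsto v atTop (𝓝 w) := by
    refine tendsto_iff_dist_tendsto_zero.2 (squeeze_zero (fun n => dist_nonneg) hvw ?_)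
    simpa using (tendsto_pow_atTop_nhds_zero_of_lt_one hθ.1.le hθ.2).const_mul
      (L * C * ((1 - θ) * T))
  have hx'T : dist x' x₀ ≤ T := by
    have := dist_le_of_le_geometric_of_tendsto₀ _ _ hθ.2 hxx hx'
    rwa [hx₀, dist_comm, mul_div_cancel_left₀ _ (sub_pos.2 hθ.2).ne'] at this
  simp only [mem_iUnion]
  exact ⟨x', mem_closedBall.2 hx'T,
    y', hcl₁.mem_of_tendsto_of_dist_le (hx'.prodMk_nhds hy') hyx hxy,
    z', hcl₂.mem_of_tendsto_of_dist_le (hx'.prodMk_nhds hz') hzx hxz,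
    hclG.mem_of_tendsto_of_dist_le ((hy'.prodMk_nhds hz').prodMk_nhds hv) hvyz hyzv⟩

end Composition

theorem openness_of_composition_at_point_general
    {X Y Z W : Type*} [NormedAddCommGroup X] [CompleteSpace X]
    [NormedAddCommGroup Y] [CompleteSpace Y]
    [NormedAddCommGroup Z] [NormedSpace ℝ Z] [CompleteSpace Z]
    [NormedAddCommGroup W] [NormedSpace ℝ W]
    (F₁ : X → Set Y) (F₂ : X → Set Z) (G : Y → Z → Set W)
    (x₀ : X) (y₀ : Y) (z₀ : Z) (w₀ : W)
    (hy : y₀ ∈ F₁ x₀) (hz : z₀ ∈ F₂ x₀) (hw : w₀ ∈ G y₀ z₀)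
    (L M C D : ℝ) (hL : 0 < L) (hM : 0 < M) (hD : 0 ≤ D)
    -- (i) local closedness of the three graphs
    (hcl₁ : ∃ r > 0, IsClosed ({q : X × Y | q.2 ∈ F₁ q.1} ∩ Metric.closedBall (x₀, y₀) r))
    (hcl₂ : ∃ r > 0, IsClosed ({q : X × Z | q.2 ∈ F₂ q.1} ∩ Metric.closedBall (x₀, z₀) r))
    (hclG : ∃ r > 0, IsClosed ({q : (Y × Z) × W | q.2 ∈ G q.1.1 q.1.2} ∩
      Metric.closedBall ((y₀, z₀), w₀) r))
    -- (ii) F₁ is L-open around (x₀, y₀)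
    (hF₁ : ∃ ε > 0, ∃ U ∈ nhds x₀, ∃ V ∈ nhds y₀,
      ∀ ρ ∈ Ioo (0:ℝ) ε, ∀ x ∈ U, ∀ y ∈ V, y ∈ F₁ x →
        ball y (ρ * L) ⊆ ⋃ x' ∈ ball x ρ, F₁ x')
    -- (iii) F₂ is M-Lipschitz-like around (x₀, z₀)
    (hF₂ : ∃ U ∈ nhds x₀, ∃ V ∈ nhds z₀, ∀ x ∈ U, ∀ u ∈ U,
      F₂ x ∩ V ⊆ F₂ u + (M * ‖x - u‖) • Metric.closedBall (0:Z) 1)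
    -- (iv) G is C-open w.r.t. y uniformly in z around ((y₀,z₀),w₀)
    (hGo : ∃ ε > 0, ∃ V ∈ nhds y₀, ∃ V' ∈ nhds z₀, ∃ V'' ∈ nhds w₀,
      ∀ ρ ∈ Ioo (0:ℝ) ε, ∀ z ∈ V', ∀ y ∈ V, ∀ w ∈ V'', w ∈ G y z →
        ball w (ρ * C) ⊆ ⋃ y' ∈ ball y ρ, G y' z)
    -- (v) G is D-Lipschitz-like w.r.t. z uniformly in y around ((y₀,z₀),w₀)
    (hGl : ∃ V ∈ nhds y₀, ∃ V' ∈ nhds z₀, ∃ V'' ∈ nhds w₀,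
      ∀ y ∈ V, ∀ z ∈ V', ∀ z' ∈ V',
        G y z ∩ V'' ⊆ G y z' + (D * ‖z - z'‖) • Metric.closedBall (0:W) 1)
    -- (vi)
    (hrate : 0 < L * C - M * D) :
    ∃ ε > 0, ∀ ρ ∈ Ioo (0:ℝ) ε,
      ball w₀ ((L * C - M * D) * ρ) ⊆
        ⋃ x ∈ ball x₀ ρ, ⋃ y ∈ F₁ x, ⋃ z ∈ F₂ x, G y z := by
  obtain ⟨r₁, hr₁, hcl₁⟩ := hcl₁
  obtain ⟨r₂, hr₂, hcl₂⟩ := hcl₂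
  obtain ⟨r₃, hr₃, hclG⟩ := hclG
  obtain ⟨ε₁, hε₁, U₁, hU₁, V₁, hV₁, hF₁⟩ := hF₁
  obtain ⟨U₂, hU₂, V₂, hV₂, hF₂⟩ := hF₂
  obtain ⟨ε₂, hε₂, Vy, hVy, Vz, hVz, Vw, hVw, hGo⟩ := hGo
  obtain ⟨Vy', hVy', Vz', hVz', Vw', hVw', hGl⟩ := hGl
  obtain ⟨δ, hδ, hδx, hδy, hδz, hδw, hδr₁, hδr₂, hδr₃⟩ :=
    ((eventually_closedBall_subset (inter_mem hU₁ hU₂)).and <|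
      (eventually_closedBall_subset (inter_mem hV₁ (inter_mem hVy hVy'))).and <|
      (eventually_closedBall_subset (inter_mem hV₂ (inter_mem hVz hVz'))).and <|
      (eventually_closedBall_subset (inter_mem hVw hVw')).and <|
      (eventually_le_nhds hr₁).and <|
      (eventually_le_nhds hr₂).and (eventually_le_nhds hr₃)).exists_pos
  obtain ⟨ε, hε, hsmall⟩ := Metric.eventually_nhds_iff_ball.1 <|
    (eventually_const_mul_lt 1 hε₁).and <| (eventually_const_mul_lt L hε₂).and <|
      (eventually_const_mul_lt 1 hδ).and <| (eventually_const_mul_lt L hδ).and <|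
      (eventually_const_mul_lt M hδ).and (eventually_const_mul_lt (2 * (L * C)) hδ)
  refine ⟨ε, hε, fun ρ hρ w hwρ => ?_⟩
  obtain ⟨T, θ, hT, hTρ, hθ, hθMD, hwT⟩ := exists_radius_ratio_of_lt (mul_nonneg hM.le hD)
    (sub_pos.1 hrate) dist_nonneg (mem_ball.1 hwρ)
  obtain ⟨hT₁, hT₂, hTδ, hLT, hMT, hCT⟩ := hsmall T (by
    rw [mem_ball, Real.dist_0_eq_abs, abs_of_pos hT]; exact hTρ.trans hρ.2)
  refine biUnion_subset_biUnion_left (closedBall_subset_ball hTρ) <|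
    mem_composition_of_dist_lt (hcl₁.inter_closedBall_of_le hδr₁)
      (hcl₂.inter_closedBall_of_le hδr₂) (hclG.inter_closedBall_of_le hδr₃)
      (OpenAtRateOn.mono (F := F₁) hF₁ (fun x hx => (hδx hx).1) (fun y hy => (hδy hy).1))
      (LipschitzLikeOn.mono (F := F₂) hF₂ (fun x hx => (hδx hx).2) (fun z hz => (hδz hz).1))
      (fun z hz ρ hρ y hy v hv => hGo ρ hρ z (hδz hz).2.1 y (hδy hy).2.1 v (hδw hv).1)
      (fun y hy z hz z' hz' => (inter_subset_inter_right _ fun v hv => (hδw hv).2).trans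
        (hGl y (hδy hy).2.2 z (hδz hz).2.2 z' (hδz hz').2.2))
      hL hM.le hD hθ hθMD hT (by linarith) hT₂ (by linarith) hLT.le hMT.le
      (by linarith) hy hz hw (by linarith)

/-- Openness at a linear rate of the composition `H(x) = G(F₁(x), F₂(x))` at the
reference point. -/
theorem openness_of_composition_at_point
    {X Y Z W : Type*} [NormedAddCommGroup X] [NormedSpace ℝ X] [CompleteSpace X]
    [NormedAddCommGroup Y] [NormedSpace ℝ Y] [CompleteSpace Y]
    [NormedAddCommGroup Z] [NormedSpace ℝ Z] [CompleteSpace Z]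
    [NormedAddCommGroup W] [NormedSpace ℝ W] [CompleteSpace W]
    (F₁ : X → Set Y) (F₂ : X → Set Z) (G : Y → Z → Set W)
    (x₀ : X) (y₀ : Y) (z₀ : Z) (w₀ : W)
    (hy : y₀ ∈ F₁ x₀) (hz : z₀ ∈ F₂ x₀) (hw : w₀ ∈ G y₀ z₀)
    (L M C D : ℝ) (hL : 0 < L) (hM : 0 < M) (hC : 0 < C) (hD : 0 ≤ D)
    -- (i) local closedness of the three graphs
    (hcl₁ : ∃ r > 0, IsClosed ({q : X × Y | q.2 ∈ F₁ q.1} ∩ Metric.closedBall (x₀, y₀) r))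
    (hcl₂ : ∃ r > 0, IsClosed ({q : X × Z | q.2 ∈ F₂ q.1} ∩ Metric.closedBall (x₀, z₀) r))
    (hclG : ∃ r > 0, IsClosed ({q : (Y × Z) × W | q.2 ∈ G q.1.1 q.1.2} ∩
      Metric.closedBall ((y₀, z₀), w₀) r))
    -- (ii) F₁ is L-open around (x₀, y₀)
    (hF₁ : ∃ ε > 0, ∃ U ∈ nhds x₀, ∃ V ∈ nhds y₀,
      ∀ ρ ∈ Ioo (0:ℝ) ε, ∀ x ∈ U, ∀ y ∈ V, y ∈ F₁ x →
        ball y (ρ * L) ⊆ ⋃ x' ∈ ball x ρ, F₁ x')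
    -- (iii) F₂ is M-Lipschitz-like around (x₀, z₀)
    (hF₂ : ∃ U ∈ nhds x₀, ∃ V ∈ nhds z₀, ∀ x ∈ U, ∀ u ∈ U,
      F₂ x ∩ V ⊆ F₂ u + (M * ‖x - u‖) • Metric.closedBall (0:Z) 1)
    -- (iv) G is C-open w.r.t. y uniformly in z around ((y₀,z₀),w₀)
    (hGo : ∃ ε > 0, ∃ V ∈ nhds y₀, ∃ V' ∈ nhds z₀, ∃ V'' ∈ nhds w₀,
      ∀ ρ ∈ Ioo (0:ℝ) ε, ∀ z ∈ V', ∀ y ∈ V, ∀ w ∈ V'', w ∈ G y z →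
        ball w (ρ * C) ⊆ ⋃ y' ∈ ball y ρ, G y' z)
    -- (v) G is D-Lipschitz-like w.r.t. z uniformly in y around ((y₀,z₀),w₀)
    (hGl : ∃ V ∈ nhds y₀, ∃ V' ∈ nhds z₀, ∃ V'' ∈ nhds w₀,
      ∀ y ∈ V, ∀ z ∈ V', ∀ z' ∈ V',
        G y z ∩ V'' ⊆ G y z' + (D * ‖z - z'‖) • Metric.closedBall (0:W) 1)
    -- (vi)
    (hrate : 0 < L * C - M * D) :
    ∃ ε > 0, ∀ ρ ∈ Ioo (0:ℝ) ε,
      ball w₀ ((L * C - M * D) * ρ) ⊆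
        ⋃ x ∈ ball x₀ ρ, ⋃ y ∈ F₁ x, ⋃ z ∈ F₂ x, G y z :=
  openness_of_composition_at_point_general F₁ F₂ G x₀ y₀ z₀ w₀ hy hz hw L M C D hL hM hD hcl₁ hcl₂
    hclG hF₁ hF₂ hGo hGl hrate
end

section
/- Under the assumptions of the previous statement (G D-Lipschitz-like in x uniformly in y, G C-open in y uniformly in x, F L-open around (x̄,ȳ), LC − D > 0, graphs locally closed), if in addition there exists ε > 0 such that for every x ∈ B(x̄,ε), G(x,y) ∩ G(x,y') = ∅ whenever y ≠ y', then there exists ε' > 0 such that for every ρ ∈ (0,ε') and every (x,z) ∈ Gr Φ ∩ (B(x̄,ε') × B(z̄,ε')), B(z, (LC−D)ρ) ⊆ Φ(B(x,ρ)); i.e., Φ is open at linear rate LC−D around (x̄,z̄). -/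
/-!
Given `(x, y, z)` with `z ∈ G x y` and a target `z₁` near `z`, one round of the argument uses the
openness of `G x ·` to find `y'` near `y` with `z₁ ∈ G x y'`, the openness of `F` to find `x'`
near `x` with `y' ∈ F x'`, and the Lipschitz-like property of `G · y'` to find `z' ∈ G x' y'`
with `dist z₁ z' ≤ D * dist x x'`. Since `D < L * C`, the error to `z₁` contracts geometrically;
the iterates are Cauchy and, by local closedness of the graphs, converge to a point of `Gr Φ`
over `z₁`. The disjointness condition makes the intermediate point `y` of `z ∈ Φ x` close to `y₀`
as soon as `(x, z)` is close to `(x₀, z₀)`, so that the iteration can be started there.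
-/

open Set Metric Filter Topology Pointwise

theorem exists_seq_of_forall_exists {α : Type*} {P : ℕ → α → Prop} {R : ℕ → α → α → Prop}
    {a : α} (h0 : P 0 a) (h : ∀ n a, P n a → ∃ b, P (n + 1) b ∧ R n a b) :
    ∃ u : ℕ → α, u 0 = a ∧ ∀ n, P n (u n) ∧ R n (u n) (u (n + 1)) := by
  choose next hnext using h
  let u : ∀ n, {b // P n b} := fun n =>
    Nat.rec ⟨a, h0⟩ (fun n b => ⟨next n b.1 b.2, (hnext n b.1 b.2).1⟩) n
  exact ⟨fun n => (u n).1, rfl, fun n => ⟨(u n).2, (hnext n _ (u n).2).2⟩⟩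

theorem exists_dist_le_of_mem_add_smul_unitClosedBall {E : Type*} [NormedAddCommGroup E]
    [NormedSpace ℝ E] {A : Set E} {z : E} {c : ℝ} (hc : 0 ≤ c)
    (h : z ∈ A + c • closedBall (0 : E) 1) : ∃ a ∈ A, dist z a ≤ c := by
  rw [smul_unitClosedBall_of_nonneg hc] at h
  obtain ⟨a, ha, v, hv, rfl⟩ := h
  exact ⟨a, ha, by simpa using hv⟩

theorem IsClosed.inter_closedBall_of_le_s14 {α : Type*} [PseudoMetricSpace α] {S : Set α} {c : α}
    {r r' : ℝ} (h : IsClosed (S ∩ closedBall c r')) (hr : r ≤ r') :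
    IsClosed (S ∩ closedBall c r) := by
  simpa only [inter_assoc, inter_eq_right.2 (closedBall_subset_closedBall hr)] using
    h.inter (isClosed_closedBall (x := c) (ε := r))

section

variable {X Y Z : Type*} [PseudoMetricSpace X] [PseudoMetricSpace Y] [PseudoMetricSpace Z]

/-- The hypotheses of the theorem, with every neighbourhood and every bound on the admissible
radii shrunk to the common radius `r`. -/
structure CompositionHypotheses (F : X → Set Y) (G : X → Y → Set Z) (x₀ : X) (y₀ : Y) (z₀ : Z)
    (L C D r : ℝ) : Prop where
  isClosed_graph_F : IsClosed ({q : X × Y | q.2 ∈ F q.1} ∩ closedBall (x₀, y₀) r)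
  isClosed_graph_G :
    IsClosed ({q : (X × Y) × Z | q.2 ∈ G q.1.1 q.1.2} ∩ closedBall ((x₀, y₀), z₀) r)
  lipschitzLike_G : ∀ y ∈ ball y₀ r, ∀ x ∈ ball x₀ r, ∀ x' ∈ ball x₀ r, ∀ z ∈ G x y,
    z ∈ ball z₀ r → ∃ z' ∈ G x' y, dist z z' ≤ D * dist x x'
  linearOpen_G : ∀ ρ ∈ Ioo 0 r, ∀ x ∈ ball x₀ r, ∀ y ∈ ball y₀ r, ∀ z ∈ ball z₀ r, z ∈ G x y →
    ball z (ρ * C) ⊆ ⋃ y' ∈ ball y ρ, G x y'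
  linearOpen_F : ∀ ρ ∈ Ioo 0 r, ∀ x ∈ ball x₀ r, ∀ y ∈ ball y₀ r, y ∈ F x →
    ball y (ρ * L) ⊆ ⋃ x' ∈ ball x ρ, F x'
  eq_of_mem_G : ∀ x ∈ ball x₀ r, ∀ y y' z, z ∈ G x y → z ∈ G x y' → y = y'

namespace CompositionHypotheses

variable {F : X → Set Y} {G : X → Y → Set Z} {x₀ : X} {y₀ : Y} {z₀ : Z} {L C D r : ℝ}

theorem exists_step (h : CompositionHypotheses F G x₀ y₀ z₀ L C D r) (hL : 0 < L) (hD : 0 ≤ D)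
    {a : X} {b : Y} {w z₁ : Z} {s : ℝ} (hs : 0 < s) (hsr : s < r) (hLsr : L * s < r)
    (hba : b ∈ F a) (hw : w ∈ G a b) (ha : closedBall a s ⊆ ball x₀ r)
    (hb : closedBall b (L * s) ⊆ ball y₀ r) (hw₀ : w ∈ ball z₀ r) (hz₁ : z₁ ∈ ball z₀ r)
    (hz₁w : dist z₁ w < L * C * s) :
    ∃ a' b' w', b' ∈ F a' ∧ w' ∈ G a' b' ∧ dist a a' ≤ s ∧ dist b b' ≤ L * s ∧
      dist z₁ w' ≤ D * s := by
  have haW := ha (mem_closedBall_self hs.le)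
  have hbW := hb (mem_closedBall_self (by positivity))
  obtain ⟨b', hbb', hz₁b'⟩ := mem_iUnion₂.1 <| h.linearOpen_G (L * s) ⟨by positivity, hLsr⟩
    a haW b hbW w hw₀ hw (by rwa [mem_ball, mul_right_comm])
  obtain ⟨a', haa', hb'a'⟩ := mem_iUnion₂.1 <| h.linearOpen_F s ⟨hs, hsr⟩ a haW b hbW hba
    (by rwa [mul_comm])
  obtain ⟨w', hw', hz₁w'⟩ := h.lipschitzLike_G b' (hb (ball_subset_closedBall hbb')) a haW a'
    (ha (ball_subset_closedBall haa')) z₁ hz₁b' hz₁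
  have haa's : dist a a' ≤ s := (mem_ball'.1 haa').le
  exact ⟨a', b', w', hb'a', hw', haa's, (mem_ball'.1 hbb').le,
    hz₁w'.trans (mul_le_mul_of_nonneg_left haa's hD)⟩

/-- Stage `n` of the iteration, with step size `(1 - q) * T * q ^ n`. The balls of radius
`T * q ^ n` around successive iterates are nested, which keeps every iterate in the windows. -/
theorem exists_next_iterate (h : CompositionHypotheses F G x₀ y₀ z₀ L C D r) (hL : 0 < L)
    (hC : 0 < C) (hD : 0 ≤ D) {q T : ℝ} (hq : q < 1) (hDq : D < q * (L * C)) (hT : 0 < T)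
    (hTr : T < r) (hLTr : L * T < r) {z₁ : Z}
    (hz₁ : closedBall z₁ (L * C * ((1 - q) * T)) ⊆ ball z₀ r) {n : ℕ} {a : X} {b : Y} {w : Z}
    (hba : b ∈ F a) (hw : w ∈ G a b) (ha : closedBall a (T * q ^ n) ⊆ ball x₀ r)
    (hb : closedBall b (L * (T * q ^ n)) ⊆ ball y₀ r) (hw₀ : w ∈ ball z₀ r)
    (hz₁w : dist z₁ w < L * C * ((1 - q) * (T * q ^ n))) :
    ∃ a' b' w', b' ∈ F a' ∧ w' ∈ G a' b' ∧ closedBall a' (T * q ^ (n + 1)) ⊆ ball x₀ r ∧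
      closedBall b' (L * (T * q ^ (n + 1))) ⊆ ball y₀ r ∧ w' ∈ ball z₀ r ∧
      dist z₁ w' < L * C * ((1 - q) * (T * q ^ (n + 1))) ∧
      dist a a' ≤ (1 - q) * T * q ^ n ∧ dist b b' ≤ L * ((1 - q) * T) * q ^ n := by
  have hq₀ : 0 < q := pos_of_mul_pos_left (hD.trans_lt hDq) (by positivity)
  have hTn (m : ℕ) : T * q ^ m ≤ T := mul_le_of_le_one_right hT.le (pow_le_one₀ hq₀.le hq.le)
  have hs : 0 < (1 - q) * (T * q ^ n) := mul_pos (by linarith) (by positivity)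
  have hsT : (1 - q) * (T * q ^ n) ≤ T * q ^ n := by nlinarith
  have hLs : L * ((1 - q) * (T * q ^ n)) ≤ L * (T * q ^ n) := by gcongr
  obtain ⟨a', b', w', hb'a', hw', haa', hbb', hz₁w'⟩ := h.exists_step hL hD hs
    (by nlinarith [hTn n]) (by nlinarith [hTn n]) hba hw
    ((closedBall_subset_closedBall hsT).trans ha) ((closedBall_subset_closedBall hLs).trans hb)
    hw₀ (hz₁ (mem_closedBall_self (by positivity))) hz₁w
  have hz₁w'' : dist z₁ w' < L * C * ((1 - q) * (T * q ^ (n + 1))) :=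
    calc dist z₁ w' ≤ D * ((1 - q) * (T * q ^ n)) := hz₁w'
      _ < q * (L * C) * ((1 - q) * (T * q ^ n)) := mul_lt_mul_of_pos_right hDq hs
      _ = L * C * ((1 - q) * (T * q ^ (n + 1))) := by ring
  have hqn : T * q ^ (n + 1) = T * q ^ n - (1 - q) * (T * q ^ n) := by ring
  refine ⟨a', b', w', hb'a', hw', (closedBall_subset_closedBall' ?_).trans ha,
    (closedBall_subset_closedBall' ?_).trans hb, hz₁ (mem_closedBall'.2 (hz₁w''.le.trans ?_)),
    hz₁w'', by linarith, by linarith⟩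
  · rw [dist_comm, hqn]; linarith
  · rw [dist_comm, hqn]; linarith
  · gcongr
    exact hTn (n + 1)

theorem mem_of_tendsto (h : CompositionHypotheses F G x₀ y₀ z₀ L C D r) {a : ℕ → X}
    {b : ℕ → Y} {w : ℕ → Z} {x : X} {y : Y} {z : Z} (ha : Tendsto a atTop (𝓝 x))
    (hb : Tendsto b atTop (𝓝 y)) (hw : Tendsto w atTop (𝓝 z)) (hba : ∀ n, b n ∈ F (a n))
    (hwab : ∀ n, w n ∈ G (a n) (b n)) (ha₀ : ∀ n, a n ∈ closedBall x₀ r)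
    (hb₀ : ∀ n, b n ∈ closedBall y₀ r) (hw₀ : ∀ n, w n ∈ closedBall z₀ r) :
    y ∈ F x ∧ z ∈ G x y := by
  have hab₀ (n : ℕ) : (a n, b n) ∈ closedBall (x₀, y₀) r :=
    closedBall_prod_same x₀ y₀ r ▸ ⟨ha₀ n, hb₀ n⟩
  have habw₀ (n : ℕ) : ((a n, b n), w n) ∈ closedBall ((x₀, y₀), z₀) r :=
    closedBall_prod_same (x₀, y₀) z₀ r ▸ ⟨hab₀ n, hw₀ n⟩
  exact ⟨(h.isClosed_graph_F.mem_of_tendsto (ha.prodMk_nhds hb) <|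
      .of_forall fun n => ⟨hba n, hab₀ n⟩).1,
    (h.isClosed_graph_G.mem_of_tendsto ((ha.prodMk_nhds hb).prodMk_nhds hw) <|
      .of_forall fun n => ⟨hwab n, habw₀ n⟩).1⟩

theorem exists_mem_of_dist_lt_geometric [CompleteSpace X] [CompleteSpace Y]
    (h : CompositionHypotheses F G x₀ y₀ z₀ L C D r) (hL : 0 < L) (hC : 0 < C) (hD : 0 ≤ D)
    {q T : ℝ} (hq : q < 1) (hDq : D < q * (L * C)) (hT : 0 < T) (hTr : T < r)
    (hLTr : L * T < r) {x : X} {y : Y} {z z₁ : Z} (hyx : y ∈ F x) (hz : z ∈ G x y)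
    (hx : closedBall x T ⊆ ball x₀ r) (hy : closedBall y (L * T) ⊆ ball y₀ r)
    (hz₁ : closedBall z₁ (L * C * ((1 - q) * T)) ⊆ ball z₀ r)
    (hz₁z : dist z₁ z < L * C * ((1 - q) * T)) :
    ∃ x' ∈ closedBall x T, ∃ y' ∈ F x', z₁ ∈ G x' y' := by
  have hq₀ : 0 < q := pos_of_mul_pos_left (hD.trans_lt hDq) (by positivity)
  set Inv : ℕ → X × Y × Z → Prop := fun n p => p.2.1 ∈ F p.1 ∧ p.2.2 ∈ G p.1 p.2.1 ∧
    closedBall p.1 (T * q ^ n) ⊆ ball x₀ r ∧ closedBall p.2.1 (L * (T * q ^ n)) ⊆ ball y₀ r ∧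
    p.2.2 ∈ ball z₀ r ∧ dist z₁ p.2.2 < L * C * ((1 - q) * (T * q ^ n))
  have step (n : ℕ) (p : X × Y × Z) (hp : Inv n p) : ∃ p', Inv (n + 1) p' ∧
      dist p.1 p'.1 ≤ (1 - q) * T * q ^ n ∧ dist p.2.1 p'.2.1 ≤ L * ((1 - q) * T) * q ^ n := by
    obtain ⟨hba, hw, ha, hb, hw₀, hz₁w⟩ := hp
    obtain ⟨a', b', w', hb'a', hw', ha', hb', hw₀', hz₁w', haa', hbb'⟩ :=
      h.exists_next_iterate hL hC hD hq hDq hT hTr hLTr hz₁ hba hw ha hb hw₀ hz₁w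
    exact ⟨(a', b', w'), ⟨hb'a', hw', ha', hb', hw₀', hz₁w'⟩, haa', hbb'⟩
  obtain ⟨u, hu0, hu⟩ := exists_seq_of_forall_exists (P := Inv) (a := (x, y, z))
    ⟨hyx, hz, by simpa using hx, by simpa using hy, hz₁ (mem_closedBall'.2 hz₁z.le),
      by simpa using hz₁z⟩ step
  obtain ⟨x', hx'⟩ := cauchySeq_tendsto_of_complete <|
    cauchySeq_of_le_geometric q _ hq fun n => (hu n).2.1
  obtain ⟨y', hy'⟩ := cauchySeq_tendsto_of_complete <|
    cauchySeq_of_le_geometric q _ hq fun n => (hu n).2.2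
  have hw : Tendsto (fun n => (u n).2.2) atTop (𝓝 z₁) := by
    refine tendsto_iff_dist_tendsto_zero.2 <| squeeze_zero (fun _ => dist_nonneg)
      (fun n => (dist_comm _ _).trans_le (hu n).1.2.2.2.2.2.le) ?_
    simpa using (((tendsto_pow_atTop_nhds_zero_of_lt_one hq₀.le hq).const_mul T).const_mul
      (1 - q)).const_mul (L * C)
  obtain ⟨hy'x', hz₁'⟩ := h.mem_of_tendsto hx' hy' hw (fun n => (hu n).1.1)
    (fun n => (hu n).1.2.1)
    (fun n => ball_subset_closedBall <| (hu n).1.2.2.1 (mem_closedBall_self (by positivity)))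
    (fun n => ball_subset_closedBall <| (hu n).1.2.2.2.1 (mem_closedBall_self (by positivity)))
    (fun n => ball_subset_closedBall (hu n).1.2.2.2.2.1)
  refine ⟨x', ?_, y', hy'x', hz₁'⟩
  have := dist_le_of_le_geometric_of_tendsto₀ q _ hq (fun n => (hu n).2.1) hx'
  rwa [hu0, mul_div_cancel_left₀ _ (by linarith : (1 - q) ≠ 0), dist_comm] at this

theorem ball_subset_iUnion [CompleteSpace X] [CompleteSpace Y]
    (h : CompositionHypotheses F G x₀ y₀ z₀ L C D r) (hL : 0 < L) (hC : 0 < C) (hD : 0 ≤ D)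
    {T : ℝ} (hT : 0 < T) (hTr : T < r) (hLTr : L * T < r) {x : X} {y : Y} {z : Z}
    (hyx : y ∈ F x) (hz : z ∈ G x y) (hx : closedBall x T ⊆ ball x₀ r)
    (hy : closedBall y (L * T) ⊆ ball y₀ r) (hzW : ball z (2 * ((L * C - D) * T)) ⊆ ball z₀ r) :
    ball z ((L * C - D) * T) ⊆ ⋃ x' ∈ ball x T, ⋃ y' ∈ F x', G x' y' := by
  intro z₁ hz₁
  rw [mem_ball] at hz₁
  have hrate : 0 < L * C - D := pos_of_mul_pos_left (dist_nonneg.trans_lt hz₁) hT.le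
  -- a slightly smaller radius `T'` and a rate `k < L * C - D` that still reach `z₁`
  obtain ⟨T', hT'₁, hT'₂⟩ := exists_between <|
    show dist z₁ z / (L * C - D) < T from (div_lt_iff₀ hrate).2 (by linarith)
  rw [div_lt_iff₀ hrate] at hT'₁
  have hT' : 0 < T' := by nlinarith [dist_nonneg (x := z₁) (y := z)]
  obtain ⟨k, hk₁, hk₂⟩ := exists_between <|
    show dist z₁ z / T' < L * C - D from (div_lt_iff₀ hT').2 (by linarith)
  rw [div_lt_iff₀ hT'] at hk₁
  have hk : 0 < k := by nlinarith [dist_nonneg (x := z₁) (y := z)]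
  have hLC : 0 < L * C := by positivity
  have hkT' : L * C * ((1 - (1 - k / (L * C))) * T') = k * T' := by field_simp; ring
  have hkT'T : k * T' < (L * C - D) * T := mul_lt_mul'' hk₂ hT'₂ hk.le hT'.le
  obtain ⟨x', hx', y', hy'x', hz₁'⟩ := h.exists_mem_of_dist_lt_geometric hL hC hD
    (q := 1 - k / (L * C)) (by linarith [div_pos hk hLC])
    (by rw [sub_mul, div_mul_cancel₀ _ hLC.ne']; linarith) hT' (hT'₂.trans hTr)
    ((mul_lt_mul_of_pos_left hT'₂ hL).trans hLTr) hyx hz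
    ((closedBall_subset_closedBall hT'₂.le).trans hx)
    ((closedBall_subset_closedBall (mul_le_mul_of_nonneg_left hT'₂.le hL.le)).trans hy)
    (by rw [hkT']; exact (closedBall_subset_ball' (by linarith)).trans hzW) (by rwa [hkT'])
  exact mem_iUnion₂.2 ⟨x', closedBall_subset_ball hT'₂ hx', mem_iUnion₂.2 ⟨y', hy'x', hz₁'⟩⟩

theorem dist_lt_of_mem_G (h : CompositionHypotheses F G x₀ y₀ z₀ L C D r)
    (hz₀ : z₀ ∈ G x₀ y₀) {x : X} {y : Y} {z : Z} {s : ℝ} (hx : x ∈ ball x₀ r) (hs : 0 < s)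
    (hsr : s < r) (hDx : D * dist x x₀ < r) (hzs : dist z z₀ + D * dist x x₀ < s * C)
    (hz : z ∈ G x y) : dist y y₀ < s := by
  have hr : 0 < r := pos_of_mem_ball hx
  obtain ⟨w₀, hw₀, hz₀w₀⟩ := h.lipschitzLike_G y₀ (mem_ball_self hr) x₀ (mem_ball_self hr) x hx
    z₀ hz₀ (mem_ball_self hr)
  rw [dist_comm x₀] at hz₀w₀
  obtain ⟨y', hy', hzy'⟩ := mem_iUnion₂.1 <| h.linearOpen_G s ⟨hs, hsr⟩ x hx y₀ (mem_ball_self hr)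
    w₀ (mem_ball'.2 (hz₀w₀.trans_lt hDx)) hw₀
    (mem_ball.2 (by linarith [dist_triangle z z₀ w₀] : dist z w₀ < s * C))
  rw [h.eq_of_mem_G x hx y y' z hz hzy']
  exact hy'

end CompositionHypotheses

end

theorem exists_compositionHypotheses {X Y Z : Type*} [SeminormedAddCommGroup X]
    [PseudoMetricSpace Y] [NormedAddCommGroup Z] [NormedSpace ℝ Z]
    (F : X → Set Y) (G : X → Y → Set Z) (x₀ : X) (y₀ : Y) (z₀ : Z) (L C D : ℝ) (hD : 0 ≤ D)
    (hclF : ∃ r > 0, IsClosed ({q : X × Y | q.2 ∈ F q.1} ∩ closedBall (x₀, y₀) r))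
    (hclG : ∃ r > 0, IsClosed ({q : (X × Y) × Z | q.2 ∈ G q.1.1 q.1.2} ∩
      closedBall ((x₀, y₀), z₀) r))
    (hGl : ∃ U ∈ 𝓝 x₀, ∃ V ∈ 𝓝 y₀, ∃ V' ∈ 𝓝 z₀, ∀ y ∈ V, ∀ x ∈ U, ∀ x' ∈ U,
      G x y ∩ V' ⊆ G x' y + (D * ‖x - x'‖) • closedBall (0 : Z) 1)
    (hGo : ∃ ε > 0, ∃ U ∈ 𝓝 x₀, ∃ V ∈ 𝓝 y₀, ∃ V' ∈ 𝓝 z₀,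
      ∀ ρ ∈ Ioo (0 : ℝ) ε, ∀ x ∈ U, ∀ y ∈ V, ∀ z ∈ V', z ∈ G x y →
        ball z (ρ * C) ⊆ ⋃ y' ∈ ball y ρ, G x y')
    (hF : ∃ ε > 0, ∃ U ∈ 𝓝 x₀, ∃ V ∈ 𝓝 y₀, ∀ ρ ∈ Ioo (0 : ℝ) ε, ∀ x ∈ U, ∀ y ∈ V, y ∈ F x →
        ball y (ρ * L) ⊆ ⋃ x' ∈ ball x ρ, F x')
    (hdisj : ∃ ε > 0, ∀ x ∈ ball x₀ ε, ∀ y y' : Y, y ≠ y' → G x y ∩ G x y' = ∅) :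
    ∃ r > 0, CompositionHypotheses F G x₀ y₀ z₀ L C D r := by
  obtain ⟨rF, hrF, hclF⟩ := hclF
  obtain ⟨rG, hrG, hclG⟩ := hclG
  obtain ⟨U₁, hU₁, V₁, hV₁, W₁, hW₁, hGl⟩ := hGl
  obtain ⟨εG, hεG, U₂, hU₂, V₂, hV₂, W₂, hW₂, hGo⟩ := hGo
  obtain ⟨εF, hεF, U₃, hU₃, V₃, hV₃, hF⟩ := hF
  obtain ⟨εd, hεd, hdisj⟩ := hdisj
  obtain ⟨r, hr, ⟨hrF', hrG', hrεG, hrεF, hrεd⟩, hU, hV, hW⟩ :=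
    (((eventually_le_nhds hrF).and <| (eventually_le_nhds hrG).and <|
      (eventually_le_nhds hεG).and <| (eventually_le_nhds hεF).and (eventually_le_nhds hεd)).and <|
      (eventually_ball_subset (inter_mem (inter_mem hU₁ hU₂) hU₃)).and <|
      (eventually_ball_subset (inter_mem (inter_mem hV₁ hV₂) hV₃)).and <|
      eventually_ball_subset (inter_mem hW₁ hW₂)).exists_gt
  refine ⟨r, hr, hclF.inter_closedBall_of_le_s14 hrF', hclG.inter_closedBall_of_le_s14 hrG', ?_, ?_, ?_, ?_⟩
  · intro y hy x hx x' hx' z hz hzW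
    simpa only [dist_eq_norm] using exists_dist_le_of_mem_add_smul_unitClosedBall (by positivity)
      (hGl y (hV hy).1.1 x (hU hx).1.1 x' (hU hx').1.1 ⟨hz, (hW hzW).1⟩)
  · exact fun ρ hρ x hx y hy z hz =>
      hGo ρ ⟨hρ.1, hρ.2.trans_le hrεG⟩ x (hU hx).1.2 y (hV hy).1.2 z (hW hz).2
  · exact fun ρ hρ x hx y hy => hF ρ ⟨hρ.1, hρ.2.trans_le hrεF⟩ x (hU hx).2 y (hV hy).2
  · intro x hx y y' z hzy hzy'
    by_contra hne
    exact (hdisj x (ball_subset_ball hrεd hx) y y' hne).subset ⟨hzy, hzy'⟩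

theorem openness_of_composition_A_disjoint_general
    {X Y Z : Type*} [NormedAddCommGroup X] [NormedSpace ℝ X] [CompleteSpace X]
    [NormedAddCommGroup Y] [NormedSpace ℝ Y] [CompleteSpace Y]
    [NormedAddCommGroup Z] [NormedSpace ℝ Z]
    (F : X → Set Y) (G : X → Y → Set Z)
    (x₀ : X) (y₀ : Y) (z₀ : Z) (hz : z₀ ∈ G x₀ y₀)
    (L C D : ℝ) (hL : 0 < L) (hC : 0 < C) (hD : 0 ≤ D)
    (hclF : ∃ r > 0, IsClosed ({q : X × Y | q.2 ∈ F q.1} ∩ Metric.closedBall (x₀, y₀) r))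
    (hclG : ∃ r > 0, IsClosed ({q : (X × Y) × Z | q.2 ∈ G q.1.1 q.1.2} ∩
      Metric.closedBall ((x₀, y₀), z₀) r))
    -- (i) G is D-Lipschitz-like w.r.t. x uniformly in y around ((x₀,y₀),z₀)
    (hGl : ∃ U ∈ nhds x₀, ∃ V ∈ nhds y₀, ∃ V' ∈ nhds z₀,
      ∀ y ∈ V, ∀ x ∈ U, ∀ x' ∈ U,
        G x y ∩ V' ⊆ G x' y + (D * ‖x - x'‖) • Metric.closedBall (0:Z) 1)
    -- (ii) G is C-open w.r.t. y uniformly in x around ((x₀,y₀),z₀)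
    (hGo : ∃ ε > 0, ∃ U ∈ nhds x₀, ∃ V ∈ nhds y₀, ∃ V' ∈ nhds z₀,
      ∀ ρ ∈ Ioo (0:ℝ) ε, ∀ x ∈ U, ∀ y ∈ V, ∀ z ∈ V', z ∈ G x y →
        ball z (ρ * C) ⊆ ⋃ y' ∈ ball y ρ, G x y')
    -- (iii) F is L-open around (x₀,y₀)
    (hF : ∃ ε > 0, ∃ U ∈ nhds x₀, ∃ V ∈ nhds y₀,
      ∀ ρ ∈ Ioo (0:ℝ) ε, ∀ x ∈ U, ∀ y ∈ V, y ∈ F x →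
        ball y (ρ * L) ⊆ ⋃ x' ∈ ball x ρ, F x')
    -- (iv)
    (hrate : 0 < L * C - D)
    -- the disjointness condition
    (hdisj : ∃ ε > 0, ∀ x ∈ ball x₀ ε, ∀ y y' : Y, y ≠ y' → G x y ∩ G x y' = ∅) :
    ∃ ε' > 0, ∀ ρ ∈ Ioo (0:ℝ) ε', ∀ x ∈ ball x₀ ε', ∀ z ∈ ball z₀ ε',
      z ∈ ⋃ y ∈ F x, G x y →
        ball z ((L * C - D) * ρ) ⊆ ⋃ x' ∈ ball x ρ, ⋃ y' ∈ F x', G x' y' := by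
  obtain ⟨r, hr, h⟩ :=
    exists_compositionHypotheses F G x₀ y₀ z₀ L C D hD hclF hclG hGl hGo hF hdisj
  have hsmall (c : ℝ) : ∀ᶠ ε in 𝓝 (0 : ℝ), c * ε < r :=
    (continuous_const_mul c).continuousAt.eventually_lt continuousAt_const (by simpa using hr)
  obtain ⟨ε, hε, hεx, hεy, hεz, hεD⟩ := ((hsmall 2).and <| (hsmall ((1 + D) / C + L)).and <|
    (hsmall (1 + 2 * (L * C - D))).and (hsmall D)).exists_gt
  refine ⟨ε, hε, ?_⟩
  rintro ρ ⟨hρ, hρε⟩ x hx z hzε hzΦ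
  obtain ⟨y, hyx, hzG⟩ := mem_iUnion₂.1 hzΦ
  rw [mem_ball] at hx hzε
  have hLε : 0 ≤ L * ε := by positivity
  have hsε : 0 ≤ (1 + D) / C * ε := by positivity
  have hDx : D * dist x x₀ ≤ D * ε := mul_le_mul_of_nonneg_left hx.le hD
  have hsC : (1 + D) / C * ε * C = ε + D * ε := by field_simp
  have hy : dist y y₀ < (1 + D) / C * ε := h.dist_lt_of_mem_G hz (mem_ball.2 (by linarith))
    (by positivity) (by linarith) (by linarith) (by linarith) hzG
  have hLρ : L * ρ ≤ L * ε := mul_le_mul_of_nonneg_left hρε.le hL.le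
  have hrateρ : (L * C - D) * ρ ≤ (L * C - D) * ε := mul_le_mul_of_nonneg_left hρε.le hrate.le
  exact h.ball_subset_iUnion hL hC hD hρ (by linarith) (by linarith) hyx hzG
    (closedBall_subset_ball' (by linarith)) (closedBall_subset_ball' (by linarith))
    (ball_subset_ball' (by linarith))

/-- Under the disjointness condition on the values of `G`, the composition
`Φ(x) := G(x, F(x))` is open at linear rate `L*C − D` around `(x₀, z₀)`. -/
theorem openness_of_composition_A_disjoint
    {X Y Z : Type*} [NormedAddCommGroup X] [NormedSpace ℝ X] [CompleteSpace X]
    [NormedAddCommGroup Y] [NormedSpace ℝ Y] [CompleteSpace Y]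
    [NormedAddCommGroup Z] [NormedSpace ℝ Z] [CompleteSpace Z]
    (F : X → Set Y) (G : X → Y → Set Z)
    (x₀ : X) (y₀ : Y) (z₀ : Z) (hy : y₀ ∈ F x₀) (hz : z₀ ∈ G x₀ y₀)
    (L C D : ℝ) (hL : 0 < L) (hC : 0 < C) (hD : 0 ≤ D)
    (hclF : ∃ r > 0, IsClosed ({q : X × Y | q.2 ∈ F q.1} ∩ Metric.closedBall (x₀, y₀) r))
    (hclG : ∃ r > 0, IsClosed ({q : (X × Y) × Z | q.2 ∈ G q.1.1 q.1.2} ∩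
      Metric.closedBall ((x₀, y₀), z₀) r))
    -- (i) G is D-Lipschitz-like w.r.t. x uniformly in y around ((x₀,y₀),z₀)
    (hGl : ∃ U ∈ nhds x₀, ∃ V ∈ nhds y₀, ∃ V' ∈ nhds z₀,
      ∀ y ∈ V, ∀ x ∈ U, ∀ x' ∈ U,
        G x y ∩ V' ⊆ G x' y + (D * ‖x - x'‖) • Metric.closedBall (0:Z) 1)
    -- (ii) G is C-open w.r.t. y uniformly in x around ((x₀,y₀),z₀)
    (hGo : ∃ ε > 0, ∃ U ∈ nhds x₀, ∃ V ∈ nhds y₀, ∃ V' ∈ nhds z₀,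
      ∀ ρ ∈ Ioo (0:ℝ) ε, ∀ x ∈ U, ∀ y ∈ V, ∀ z ∈ V', z ∈ G x y →
        ball z (ρ * C) ⊆ ⋃ y' ∈ ball y ρ, G x y')
    -- (iii) F is L-open around (x₀,y₀)
    (hF : ∃ ε > 0, ∃ U ∈ nhds x₀, ∃ V ∈ nhds y₀,
      ∀ ρ ∈ Ioo (0:ℝ) ε, ∀ x ∈ U, ∀ y ∈ V, y ∈ F x →
        ball y (ρ * L) ⊆ ⋃ x' ∈ ball x ρ, F x')
    -- (iv)
    (hrate : 0 < L * C - D)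
    -- the disjointness condition
    (hdisj : ∃ ε > 0, ∀ x ∈ ball x₀ ε, ∀ y y' : Y, y ≠ y' → G x y ∩ G x y' = ∅) :
    ∃ ε' > 0, ∀ ρ ∈ Ioo (0:ℝ) ε', ∀ x ∈ ball x₀ ε', ∀ z ∈ ball z₀ ε',
      z ∈ ⋃ y ∈ F x, G x y →
        ball z ((L * C - D) * ρ) ⊆ ⋃ x' ∈ ball x ρ, ⋃ y' ∈ F x', G x' y' :=
  openness_of_composition_A_disjoint_general F G x₀ y₀ z₀ hz L C D hL hC hD hclF hclG hGl hGo hF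
    hrate hdisj
end
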